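/- arXiv:2308.12451 — 6 statements merged into one kernel-verified Lean document; each statement's English description precedes it below -/
import Mathlib

section
/- Let X, Z be finite nonempty sets and let A : X×Z → ℝ_{≥0} be a nonnegative function. Then for all positive integers ℓ ≤ ℓ' and k ≤ k', one has ‖A‖_{U(ℓ,k)} ≤ ‖A‖_{U(ℓ',k)} and ‖A‖_{U(ℓ,k)} ≤ ‖A‖_{U(ℓ,k')}. -/
open Finset

/-- Expectation of `f` with respect to the uniform distribution on a finite type. -/
noncomputable def eavg {α : Type*} [Fintype α] (f : α → ℝ) : ℝ :=
  (∑ a, f a) / (Fintype.card α : ℝ)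

/-- `A : X × Z → ℝ` is `(r,ε)`-spread: no rectangle of density at least `2^{-r}`
has average notably larger than the global average. -/
def Spread {X Z : Type*} [Fintype X] [Fintype Z]
    (A : X × Z → ℝ) (r ε : ℝ) : Prop :=
  ∀ (X' : Finset X) (Z' : Finset Z),
    (2 : ℝ) ^ (-r) * ((Fintype.card X : ℝ) * Fintype.card Z) ≤ (X'.card : ℝ) * Z'.card →
    (∑ x ∈ X', ∑ z ∈ Z', A (x, z)) / ((X'.card : ℝ) * Z'.card) ≤ (1 + ε) * eavg A

/-- `A : X × Z → ℝ` is `ε`-left lower-bounded: every row average is at least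
`(1-ε)` times the global average. -/
def LeftLB {X Z : Type*} [Fintype X] [Fintype Z]
    (A : X × Z → ℝ) (ε : ℝ) : Prop :=
  ∀ x : X, (1 - ε) * eavg A ≤ (∑ z : Z, A (x, z)) / (Fintype.card Z : ℝ)

/-- The grid quantity `U_{ℓ,k}(f) = E ∏_{i,j} f(x_i, z_j)`. -/
noncomputable def gridU {X Z : Type*} [Fintype X] [Fintype Z]
    (f : X × Z → ℝ) (l k : ℕ) : ℝ :=
  (∑ x : Fin l → X, ∑ z : Fin k → Z, ∏ i, ∏ j, f (x i, z j)) /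
    ((Fintype.card X : ℝ) ^ l * (Fintype.card Z : ℝ) ^ k)

/-- The grid norm `‖f‖_{U(ℓ,k)} = |U_{ℓ,k}(f)|^{1/(ℓk)}`. -/
noncomputable def gridNorm {X Z : Type*} [Fintype X] [Fintype Z]
    (f : X × Z → ℝ) (l k : ℕ) : ℝ :=
  |gridU f l k| ^ ((1 : ℝ) / ((l : ℝ) * k))

/-!
Averaging first over the columns, `U_{ℓ,k}(A) = E_x g(x)^k` where `g(x) = E_z ∏_i A(x_i, z) ≥ 0`
for `x ∈ X^ℓ`, so `‖A‖_{U(ℓ,k)} = ((E g^k)^{1/k})^{1/ℓ}`, which increases with `k` by the power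
mean inequality. Transposing `A` exchanges the roles of `ℓ` and `k`.
-/

variable {X Z : Type*} [Fintype X] [Fintype Z]

lemma eavg_eq_sum_inv_card_mul {α : Type*} [Fintype α] (f : α → ℝ) :
    eavg f = ∑ a, (Fintype.card α : ℝ)⁻¹ * f a := by
  rw [eavg, ← mul_sum, inv_mul_eq_div]

lemma eavg_nonneg {α : Type*} [Fintype α] {f : α → ℝ} (hf : ∀ a, 0 ≤ f a) : 0 ≤ eavg f :=
  div_nonneg (sum_nonneg fun a _ => hf a) (Nat.cast_nonneg _)

lemma eavg_rpow_rpow_one_div_le {α : Type*} [Fintype α] [Nonempty α] {f : α → ℝ}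
    (hf : ∀ a, 0 ≤ f a) {p q : ℝ} (hp : 0 < p) (hpq : p ≤ q) :
    eavg (fun a => f a ^ p) ^ (1 / p) ≤ eavg (fun a => f a ^ q) ^ (1 / q) := by
  have hq : 0 < q := hp.trans_le hpq
  have hw : ∑ _a : α, (Fintype.card α : ℝ)⁻¹ = 1 := by simp
  have jensen : eavg (fun a => f a ^ p) ^ (q / p) ≤ eavg fun a => f a ^ q := by
    have h := Real.rpow_arith_mean_le_arith_mean_rpow univ (fun _ => (Fintype.card α : ℝ)⁻¹)
      (fun a => f a ^ p) (fun _ _ => by positivity) hw (fun a _ => Real.rpow_nonneg (hf a) p)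
      ((one_le_div hp).2 hpq)
    simpa only [eavg_eq_sum_inv_card_mul, ← Real.rpow_mul (hf _), mul_div_cancel₀ q hp.ne']
      using h
  have hmean : 0 ≤ eavg (fun a => f a ^ p) := eavg_nonneg fun a => Real.rpow_nonneg (hf a) p
  calc eavg (fun a => f a ^ p) ^ (1 / p)
      = (eavg (fun a => f a ^ p) ^ (q / p)) ^ (1 / q) := by
        rw [← Real.rpow_mul hmean, div_mul_div_comm, mul_one, mul_comm, ← div_div,
          div_self hq.ne']
    _ ≤ eavg (fun a => f a ^ q) ^ (1 / q) := by gcongr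

lemma gridU_eq_eavg_pow (A : X × Z → ℝ) (l k : ℕ) :
    gridU A l k = eavg fun x : Fin l → X => (eavg fun z => ∏ i, A (x i, z)) ^ k := by
  have hrow (x : Fin l → X) :
      ∑ z : Fin k → Z, ∏ i, ∏ j, A (x i, z j) = (∑ z, ∏ i, A (x i, z)) ^ k := by
    rw [Fintype.sum_pow]
    exact sum_congr rfl fun z _ => prod_comm
  simp only [gridU, eavg, hrow, div_pow, ← sum_div, div_div, Fintype.card_fun, Fintype.card_fin,
    Nat.cast_pow, mul_comm]

lemma gridU_comp_swap (A : X × Z → ℝ) (l k : ℕ) : gridU (A ∘ Prod.swap) k l = gridU A l k := by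
  rw [gridU, gridU, sum_comm, mul_comm]
  exact congrArg (· / _) (sum_congr rfl fun x _ => sum_congr rfl fun z _ => prod_comm)

lemma gridNorm_comp_swap (A : X × Z → ℝ) (l k : ℕ) :
    gridNorm (A ∘ Prod.swap) k l = gridNorm A l k := by
  rw [gridNorm, gridNorm, gridU_comp_swap, mul_comm]

lemma gridNorm_eq_rpow (A : X × Z → ℝ) (hA : ∀ p, 0 ≤ A p) (l k : ℕ) :
    gridNorm A l k =
      ((eavg fun x : Fin l → X => (eavg fun z => ∏ i, A (x i, z)) ^ k) ^ (1 / (k : ℝ)))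
        ^ (1 / (l : ℝ)) := by
  have hU : 0 ≤ gridU A l k := by
    rw [gridU_eq_eavg_pow]
    exact eavg_nonneg fun x => pow_nonneg (eavg_nonneg fun z => prod_nonneg fun i _ => hA _) k
  rw [gridNorm, abs_of_nonneg hU, ← gridU_eq_eavg_pow, ← Real.rpow_mul hU, one_div_mul_one_div,
    mul_comm]

lemma gridNorm_le_gridNorm_of_le_right [Nonempty X] (A : X × Z → ℝ) (hA : ∀ p, 0 ≤ A p)
    (l : ℕ) {k k' : ℕ} (hk : 0 < k) (hkk' : k ≤ k') : gridNorm A l k ≤ gridNorm A l k' := by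
  have hrow (x : Fin l → X) : 0 ≤ eavg fun z => ∏ i, A (x i, z) :=
    eavg_nonneg fun z => prod_nonneg fun i _ => hA _
  have hmean := eavg_rpow_rpow_one_div_le hrow (Nat.cast_pos.2 hk) (Nat.cast_le.2 hkk')
  simp only [Real.rpow_natCast] at hmean
  rw [gridNorm_eq_rpow A hA, gridNorm_eq_rpow A hA]
  gcongr ?_ ^ _
  exact Real.rpow_nonneg (eavg_nonneg fun x => pow_nonneg (hrow x) k) _

/-- monotonicity of grid norms for nonnegative functions. -/
theorem gridNorm_monotone :
    ∀ (X Z : Type) [Fintype X] [Fintype Z], Nonempty X → Nonempty Z →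
      ∀ (A : X × Z → ℝ), (∀ p, 0 ≤ A p) →
        ∀ l k l' k' : ℕ, 0 < l → 0 < k → l ≤ l' → k ≤ k' →
          gridNorm A l k ≤ gridNorm A l' k ∧ gridNorm A l k ≤ gridNorm A l k' := by
  intro X Z _ _ _ _ A hA l k l' k' hl hk hll' hkk'
  refine ⟨?_, gridNorm_le_gridNorm_of_le_right A hA l hk hkk'⟩
  rw [← gridNorm_comp_swap, ← gridNorm_comp_swap A]
  exact gridNorm_le_gridNorm_of_le_right (A ∘ Prod.swap) (fun p => hA _) k hl hll'
end

section
/- Let X, Y, Z be finite nonempty sets, let f : X×Z → ℝ and g : Y×Z → ℝ, and let k be an even positive integer. Then E_{x∈X, y∈Y}[(E_{z∈Z} f(x,z)g(y,z))^k] ≤ U_{2,k}(f)^{1/2} · U_{2,k}(g)^{1/2}. -/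
/-!
Expanding the `k`-th power, `E_{x,y} (E_z f(x,z) g(y,z))^k = E_{z ∈ Z^k} F(z) G(z)` where
`F(z) = E_x ∏_j f(x, z_j)` and `G(z) = E_y ∏_j g(y, z_j)`; likewise `U_{2,k}(f) = E_z F(z)^2`
and `U_{2,k}(g) = E_z G(z)^2`. The inequality is then Cauchy–Schwarz over `z ∈ Z^k`.
-/

open Finset

lemma sqrt_div_sq_mul_mul_sqrt_div_sq_mul {a a' b b' c : ℝ} (hb : 0 ≤ b) (hb' : 0 ≤ b')
    (hc : 0 ≤ c) : √(a / (b ^ 2 * c)) * √(a' / (b' ^ 2 * c)) = √a * √a' / (b * b' * c) := by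
  rw [Real.sqrt_div' _ (by positivity), Real.sqrt_div' _ (by positivity),
    Real.sqrt_mul (sq_nonneg b), Real.sqrt_mul (sq_nonneg b'), Real.sqrt_sq hb, Real.sqrt_sq hb',
    div_mul_div_comm, mul_mul_mul_comm, Real.mul_self_sqrt hc]

section
variable {X Z : Type*} [Fintype X] [Fintype Z]

def rowProdSum {k : ℕ} (f : X × Z → ℝ) (z : Fin k → Z) : ℝ := ∑ x, ∏ j, f (x, z j)

lemma gridU_eq_sum_rowProdSum_pow (f : X × Z → ℝ) (l k : ℕ) :
    gridU f l k = (∑ z : Fin k → Z, rowProdSum f z ^ l) /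
      ((Fintype.card X : ℝ) ^ l * (Fintype.card Z : ℝ) ^ k) := by
  rw [gridU, sum_comm]
  simp only [rowProdSum, Fintype.sum_pow]

lemma sum_avg_mul_pow_div_eq_sum_rowProdSum_mul {Y : Type*} [Fintype Y]
    (f : X × Z → ℝ) (g : Y × Z → ℝ) (k : ℕ) :
    (∑ x, ∑ y, ((∑ z, f (x, z) * g (y, z)) / (Fintype.card Z : ℝ)) ^ k) /
        ((Fintype.card X : ℝ) * Fintype.card Y) =
      (∑ z : Fin k → Z, rowProdSum f z * rowProdSum g z) /
        (Fintype.card X * Fintype.card Y * (Fintype.card Z : ℝ) ^ k) := by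
  have hexpand : ∀ x y, (∑ z, f (x, z) * g (y, z)) ^ k =
      ∑ z : Fin k → Z, (∏ j, f (x, z j)) * ∏ j, g (y, z j) := fun x y => by
    simp only [Fintype.sum_pow, prod_mul_distrib]
  simp only [div_pow, hexpand, ← sum_div, div_div, rowProdSum, sum_mul_sum]
  congr 1
  · conv_rhs => rw [sum_comm]
    exact sum_congr rfl fun x _ => sum_comm
  · ring

end

/-- decoupling inequality for `U_{2,k}`. -/
theorem decoupling :
    ∀ (X Y Z : Type) [Fintype X] [Fintype Y] [Fintype Z],
      Nonempty X → Nonempty Y → Nonempty Z →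
      ∀ (f : X × Z → ℝ) (g : Y × Z → ℝ) (k : ℕ), 0 < k → Even k →
        (∑ x : X, ∑ y : Y,
            ((∑ z : Z, f (x, z) * g (y, z)) / (Fintype.card Z : ℝ)) ^ k) /
          ((Fintype.card X : ℝ) * Fintype.card Y) ≤
        Real.sqrt (gridU f 2 k) * Real.sqrt (gridU g 2 k) := by
  intro X Y Z _ _ _ _ _ _ f g k _ _
  rw [sum_avg_mul_pow_div_eq_sum_rowProdSum_mul, gridU_eq_sum_rowProdSum_pow,
    gridU_eq_sum_rowProdSum_pow,
    sqrt_div_sq_mul_mul_sqrt_div_sq_mul (by positivity) (by positivity) (by positivity)]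
  gcongr
  exact Real.sum_mul_le_sqrt_mul_sqrt _ _ _
end

section
/- Let X, Y be finite nonempty sets, let Δ > 0, δ > 0, ε > 0. Let D : X×Y → ℝ_{≥0} satisfy ‖D‖_∞ ≤ Δ, and let F : X×Y → ℝ be a convex combination of rectangle indicator functions with ‖F‖₁ ≥ δ. If ⟨F/‖F‖₁, D⟩ ≥ 1 + ε, then there is a rectangle R = X'×Y' ⊆ X×Y with E_{(x,y)∈R}[D(x,y)] ≥ 1 + ε/2 and |R|/(|X||Y|) ≥ εδ/(2Δ). -/
/-!
Write `F = ∑ᵢ cᵢ 𝟙_{Rᵢ}` with `βᵢ = |Rᵢ|` and `σᵢ = ∑_{Rᵢ} D`. Since `F ≥ 0`, the hypotheses say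
`∑ cᵢ βᵢ ≥ δ |X||Y|` and `∑ cᵢ σᵢ ≥ (1 + ε) ∑ cᵢ βᵢ`, so the convex combination of the excesses
`σᵢ - (1 + ε/2) βᵢ` is at least `(ε/2) δ |X||Y|`, and hence so is one excess. That rectangle has
average at least `1 + ε/2`, and because `σᵢ ≤ Δ βᵢ` it has `Δ βᵢ ≥ (ε/2) δ |X||Y|`.
-/

open Finset

theorem Finset.exists_le_of_le_sum_mul {ι : Type*} [Fintype ι] {c g : ι → ℝ} {K : ℝ}
    (hc0 : ∀ i, 0 ≤ c i) (hc1 : ∑ i, c i = 1) (h : K ≤ ∑ i, c i * g i) : ∃ i, K ≤ g i := by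
  obtain ⟨i, -, hi⟩ := exists_max_image univ g (nonempty_of_sum_ne_zero (hc1 ▸ one_ne_zero))
  refine ⟨i, h.trans ?_⟩
  calc ∑ j, c j * g j ≤ ∑ j, c j * g i :=
        sum_le_sum fun j _ => mul_le_mul_of_nonneg_left (hi j (mem_univ j)) (hc0 j)
    _ = g i := by rw [← sum_mul, hc1, one_mul]

theorem exists_dense_of_weighted_excess {ι : Type*} [Fintype ι] {c β σ : ι → ℝ} {Δ ε m : ℝ}
    (hc0 : ∀ i, 0 ≤ c i) (hc1 : ∑ i, c i = 1) (hβ : ∀ i, 0 ≤ β i) (hσ : ∀ i, σ i ≤ Δ * β i)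
    (hΔ : 0 < Δ) (hε : 0 < ε) (hm : 0 < m)
    (hmass : m ≤ ∑ i, c i * β i) (hexcess : (1 + ε) * ∑ i, c i * β i ≤ ∑ i, c i * σ i) :
    ∃ i, (1 + ε / 2) * β i ≤ σ i ∧ ε * m / (2 * Δ) ≤ β i := by
  have hK : ε * m / 2 ≤ ∑ i, c i * (σ i - (1 + ε / 2) * β i) := by
    simp only [mul_sub, sum_sub_distrib, mul_left_comm _ (1 + ε / 2), ← mul_sum]
    nlinarith
  obtain ⟨i, hi⟩ := exists_le_of_le_sum_mul hc0 hc1 hK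
  refine ⟨i, by nlinarith, ?_⟩
  rw [div_le_iff₀ (by positivity)]
  nlinarith [hσ i, hβ i]

theorem eavg_div_const {α : Type*} [Fintype α] (f : α → ℝ) (r : ℝ) :
    eavg (fun a => f a / r) = eavg f / r := by
  rw [eavg, eavg, ← sum_div, div_right_comm]

section Rectangles

variable {X Y : Type*}

theorem eavg_prod [Fintype X] [Fintype Y] (f : X × Y → ℝ) :
    eavg f = (∑ p, f p) / ((Fintype.card X : ℝ) * Fintype.card Y) := by
  rw [eavg, Fintype.card_prod, Nat.cast_mul]

theorem sum_rect_le {Δ : ℝ} {D : X × Y → ℝ} (hD : ∀ p, D p ≤ Δ) (A : Finset X) (B : Finset Y) :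
    ∑ x ∈ A, ∑ y ∈ B, D (x, y) ≤ Δ * (A.card * B.card) := by
  calc ∑ x ∈ A, ∑ y ∈ B, D (x, y) ≤ ∑ x ∈ A, ∑ y ∈ B, Δ :=
        sum_le_sum fun x _ => sum_le_sum fun y _ => hD (x, y)
    _ = Δ * (A.card * B.card) := by simp only [sum_const, nsmul_eq_mul]; ring

variable [DecidableEq X] [DecidableEq Y]
variable {n : ℕ} {c : Fin n → ℝ} {RX : Fin n → Finset X} {RY : Fin n → Finset Y} {F : X × Y → ℝ}

theorem convex_rect_nonneg (hc0 : ∀ i, 0 ≤ c i)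
    (hF : ∀ p, F p = ∑ i, c i * (if p.1 ∈ RX i ∧ p.2 ∈ RY i then 1 else 0)) (p : X × Y) :
    0 ≤ F p := by
  rw [hF]
  exact sum_nonneg fun i _ => mul_nonneg (hc0 i) (by positivity)

variable [Fintype X] [Fintype Y]

theorem sum_rect_indicator_mul (A : Finset X) (B : Finset Y) (f : X × Y → ℝ) :
    ∑ p : X × Y, (if p.1 ∈ A ∧ p.2 ∈ B then (1 : ℝ) else 0) * f p
      = ∑ x ∈ A, ∑ y ∈ B, f (x, y) := by
  simp only [ite_mul, one_mul, zero_mul, ← mem_product, ← sum_filter, filter_mem_eq_inter,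
    univ_inter, sum_product]

theorem sum_convex_rect_mul (hF : ∀ p, F p = ∑ i, c i * (if p.1 ∈ RX i ∧ p.2 ∈ RY i then 1 else 0))
    (f : X × Y → ℝ) : ∑ p, F p * f p = ∑ i, c i * ∑ x ∈ RX i, ∑ y ∈ RY i, f (x, y) := by
  simp only [hF, sum_mul, mul_assoc]
  rw [sum_comm]
  simp only [← mul_sum, sum_rect_indicator_mul]

theorem eavg_abs_convex_rect (hc0 : ∀ i, 0 ≤ c i)
    (hF : ∀ p, F p = ∑ i, c i * (if p.1 ∈ RX i ∧ p.2 ∈ RY i then 1 else 0)) :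
    eavg (fun p => |F p|) = (∑ i, c i * ((RX i).card * (RY i).card))
      / ((Fintype.card X : ℝ) * Fintype.card Y) := by
  have hcard := sum_convex_rect_mul hF fun _ => 1
  simp only [mul_one, sum_const, nsmul_eq_mul] at hcard
  rw [← hcard, eavg_prod]
  exact congrArg (· / _) (sum_congr rfl fun p _ => abs_of_nonneg (convex_rect_nonneg hc0 hF p))

end Rectangles

/-- pruning: if a nonnegative bounded function correlates with a
convex combination of rectangles, it correlates with a single large rectangle. -/
theorem pruning :
    ∀ (X Y : Type) [Fintype X] [Fintype Y] [DecidableEq X] [DecidableEq Y],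
      Nonempty X → Nonempty Y →
      ∀ (Δ δ ε : ℝ), 0 < Δ → 0 < δ → 0 < ε →
      ∀ D : X × Y → ℝ, (∀ p, 0 ≤ D p) → (∀ p, |D p| ≤ Δ) →
      ∀ (n : ℕ) (c : Fin n → ℝ) (RX : Fin n → Finset X) (RY : Fin n → Finset Y),
        (∀ i, 0 ≤ c i) → (∑ i, c i) = 1 →
        ∀ F : X × Y → ℝ,
          (∀ p, F p = ∑ i, c i * (if p.1 ∈ RX i ∧ p.2 ∈ RY i then 1 else 0)) →
          δ ≤ eavg (fun p => |F p|) →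
          1 + ε ≤ eavg (fun p => F p / eavg (fun q => |F q|) * D p) →
          ∃ (X' : Finset X) (Y' : Finset Y),
            1 + ε / 2 ≤ (∑ x ∈ X', ∑ y ∈ Y', D (x, y)) / ((X'.card : ℝ) * Y'.card) ∧
            ε * δ / (2 * Δ) ≤
              ((X'.card : ℝ) * Y'.card) / ((Fintype.card X : ℝ) * Fintype.card Y) := by
  intro X Y _ _ _ _ hX hY Δ δ ε hΔ hδ hε D _ hDΔ n c RX RY hc0 hc1 F hF hδF hcorr
  set N : ℝ := (Fintype.card X : ℝ) * Fintype.card Y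
  have hN : 0 < N := by positivity
  have hμ : eavg (fun p => |F p|) * N = ∑ i, c i * ((RX i).card * (RY i).card) := by
    rw [eavg_abs_convex_rect hc0 hF, div_mul_cancel₀ _ hN.ne']
  set μ := eavg (fun p => |F p|)
  have hexcess : (1 + ε) * (μ * N) ≤ ∑ i, c i * ∑ x ∈ RX i, ∑ y ∈ RY i, D (x, y) := by
    simp only [div_mul_eq_mul_div] at hcorr
    rw [eavg_div_const, eavg_prod, sum_convex_rect_mul hF, div_div,
      le_div_iff₀ (by nlinarith)] at hcorr
    linarith
  rw [hμ] at hexcess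
  obtain ⟨i, hσ, hβ⟩ := exists_dense_of_weighted_excess (m := δ * N) hc0 hc1
    (fun i => by positivity) (fun i => sum_rect_le (fun p => (le_abs_self _).trans (hDΔ p)) (RX i) (RY i)) hΔ hε
    (by positivity) (hμ ▸ mul_le_mul_of_nonneg_right hδF hN.le) hexcess
  refine ⟨RX i, RY i, ?_, ?_⟩
  · rw [le_div_iff₀ ((by positivity : (0:ℝ) < _).trans_le hβ)]
    exact hσ
  · rw [le_div_iff₀ hN]
    linarith [show ε * (δ * N) / (2 * Δ) = ε * δ / (2 * Δ) * N by ring]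
end

section
/- Let X, Y be finite nonempty sets, let δ, ε ∈ (0,1), let ℓ, k be positive integers, and let A : X×Y → [0,1] with ‖A‖₁ ≥ δ. (a) If ‖A‖_{U(ℓ,k)} ≥ (1+ε)‖A‖₁, then there is a rectangle R = X'×Y' ⊆ X×Y with E_{(x,y)∈R}[A(x,y)] ≥ (1+ε/2)‖A‖₁ and |R|/(|X||Y|) ≥ (1/2)·ε·δ^{ℓk+1}. (b) Consequently, if A is (r,ε)-spread for some r ≥ (ℓk+1)·log₂(1/δ) + log₂(1/ε), then ‖A‖_{U(ℓ,k)} ≤ (1+2ε)‖A‖₁. -/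
open Finset

/-!
Write `ℓ = m + 1`, `k = n + 1`, `α = 𝔼 A` and `U = U_{ℓ,k}(A)`, so that `U ≥ ((1 + ε) α) ^ (ℓk)`.
Peeling off the first row `x` and the first column `y` of the grid,
`U = 𝔼_{x⃗, y⃗} C 𝔼_{x,y} A(x, y) P(x) Q(y)`, where `C` is the product of `A` over the remaining
`m × n` grid and `P`, `Q` are the products along the peeled row and column; all these weights lie
in `[0, 1]`. Replacing `A(x, y)` by the constant `c = (1 + ε/2) α` gives `c V`, and Hölder's
inequality together with the monotonicity of grid norms in the number of rows gives
`V ≤ U ^ (1 - 1/(ℓk))`, whence `U - c V ≥ (ε/2) α ^ (ℓk)`. Hence for some `x⃗, y⃗` the weighted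
average of `A - c` is at least `(ε/2) α ^ (ℓk)`; as it is bilinear in the weights of `x` and of
`y`, they may be rounded to indicators of sets `X'`, `Y'`. Since `A - c ≤ 1`, the rectangle
`X' × Y'` has density at least `(ε/2) α ^ (ℓk)` and average above `c`. Part (b) is the
contrapositive, with `2ε` in place of `ε`.
-/

open scoped BigOperators

section Expectation

variable {ι : Type*} [Fintype ι]

theorem eavg_eq_expect (f : ι → ℝ) : eavg f = 𝔼 i, f i :=
  (Fintype.expect_eq_sum_div_card f).symm

theorem sum_pow_mul_pow_succ_le {F G : ι → ℝ} (hF : ∀ i, 0 ≤ F i) (hG : ∀ i, 0 ≤ G i) (n : ℕ) :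
    (∑ i, F i ^ n * G i) ^ (n + 1) ≤ (∑ i, F i ^ (n + 1)) ^ n * ∑ i, G i ^ (n + 1) := by
  rcases n.eq_zero_or_pos with rfl | hn
  · simp
  have hn' : (0 : ℝ) < n := by exact_mod_cast hn
  have hpq : Real.HolderConjugate ((n + 1) / n) (n + 1) := by
    rw [Real.holderConjugate_iff, inv_div]
    constructor
    · rw [lt_div_iff₀ hn']; linarith
    · field_simp
  have holder := Real.inner_le_Lp_mul_Lq_of_nonneg univ hpq
    (fun i _ => pow_nonneg (hF i) n) (fun i _ => hG i)
  have hFpow : ∀ i, (F i ^ n) ^ (((n : ℝ) + 1) / n) = F i ^ (n + 1) := fun i => by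
    rw [← Real.rpow_natCast, ← Real.rpow_mul (hF i), mul_div_cancel₀ _ hn'.ne', ← Real.rpow_natCast]
    push_cast; rfl
  have hGpow : ∀ i, G i ^ ((n : ℝ) + 1) = G i ^ (n + 1) := fun i => by
    rw [← Real.rpow_natCast]; push_cast; rfl
  simp only [hFpow, hGpow] at holder
  have ha : 0 ≤ ∑ i, F i ^ (n + 1) := sum_nonneg fun i _ => pow_nonneg (hF i) _
  have hb : 0 ≤ ∑ i, G i ^ (n + 1) := sum_nonneg fun i _ => pow_nonneg (hG i) _
  have e1 : 1 / (((n : ℝ) + 1) / n) * ((n + 1 : ℕ) : ℝ) = n := by push_cast; field_simp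
  have e2 : 1 / ((n : ℝ) + 1) * ((n + 1 : ℕ) : ℝ) = 1 := by push_cast; field_simp
  calc (∑ i, F i ^ n * G i) ^ (n + 1)
      ≤ ((∑ i, F i ^ (n + 1)) ^ (1 / (((n : ℝ) + 1) / n)) *
          (∑ i, G i ^ (n + 1)) ^ (1 / ((n : ℝ) + 1))) ^ (n + 1) :=
        pow_le_pow_left₀ (sum_nonneg fun i _ => mul_nonneg (pow_nonneg (hF i) n) (hG i)) holder _
    _ = (∑ i, F i ^ (n + 1)) ^ n * ∑ i, G i ^ (n + 1) := by
        rw [mul_pow, ← Real.rpow_natCast, ← Real.rpow_mul ha, e1, ← Real.rpow_natCast (_ ^ _),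
          ← Real.rpow_mul hb, e2, Real.rpow_natCast, Real.rpow_one]

/-- Hölder's inequality for the exponents `(n + 1) / n` and `n + 1`. -/
theorem expect_pow_mul_pow_succ_le {F G : ι → ℝ} (hF : ∀ i, 0 ≤ F i) (hG : ∀ i, 0 ≤ G i)
    (n : ℕ) :
    (𝔼 i, F i ^ n * G i) ^ (n + 1) ≤ (𝔼 i, F i ^ (n + 1)) ^ n * 𝔼 i, G i ^ (n + 1) := by
  simp only [Fintype.expect_eq_sum_div_card, div_pow]
  rw [div_mul_div_comm, ← pow_succ]
  gcongr
  exact sum_pow_mul_pow_succ_le hF hG n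

theorem expect_pi_fin_succ {T : Type*} [Fintype T] {n : ℕ} (f : (Fin (n + 1) → T) → ℝ) :
    𝔼 v, f v = 𝔼 x, 𝔼 v : Fin n → T, f (Fin.cons x v) := by
  rw [← Fintype.expect_equiv (Fin.consEquiv fun _ => T) (fun p => f (Fin.cons p.1 p.2)) f
    fun _ => rfl, ← Finset.univ_product_univ]
  exact Finset.expect_product' univ univ fun x v => f (Fin.cons x v)

end Expectation

theorem prod_nonneg_and_le_one {ι : Type*} (s : Finset ι) {f : ι → ℝ}
    (hf : ∀ i, 0 ≤ f i ∧ f i ≤ 1) : 0 ≤ ∏ i ∈ s, f i ∧ ∏ i ∈ s, f i ≤ 1 :=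
  ⟨prod_nonneg fun i _ => (hf i).1, prod_le_one (fun i _ => (hf i).1) fun i _ => (hf i).2⟩

theorem sum_mul_le_sum_filter_nonneg {ι : Type*} [Fintype ι] {g : ι → ℝ}
    (hg : ∀ i, 0 ≤ g i ∧ g i ≤ 1) (w : ι → ℝ) : ∑ i, g i * w i ≤ ∑ i with 0 ≤ w i, w i := by
  rw [sum_filter]
  refine sum_le_sum fun i _ => ?_
  split_ifs with hw
  · exact mul_le_of_le_one_left hw (hg i).2
  · exact mul_nonpos_of_nonneg_of_nonpos (hg i).1 (not_le.mp hw).le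

theorem exists_sum_sum_mul_mul_le {X Y : Type*} [Fintype X] [Fintype Y] (B : X → Y → ℝ)
    {u : X → ℝ} {v : Y → ℝ} (hu : ∀ x, 0 ≤ u x ∧ u x ≤ 1) (hv : ∀ y, 0 ≤ v y ∧ v y ≤ 1) :
    ∃ (X' : Finset X) (Y' : Finset Y), ∑ x, ∑ y, B x y * u x * v y ≤ ∑ x ∈ X', ∑ y ∈ Y', B x y := by
  set X' := ({x | 0 ≤ ∑ y, B x y * v y} : Finset X)
  refine ⟨X', ({y | 0 ≤ ∑ x ∈ X', B x y} : Finset Y), ?_⟩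
  calc ∑ x, ∑ y, B x y * u x * v y = ∑ x, u x * ∑ y, B x y * v y := by
        simp only [mul_sum]
        exact sum_congr rfl fun x _ => sum_congr rfl fun y _ => by ring
    _ ≤ ∑ x ∈ X', ∑ y, B x y * v y := sum_mul_le_sum_filter_nonneg hu _
    _ = ∑ y, v y * ∑ x ∈ X', B x y := by
        rw [sum_comm]
        simp only [mul_sum]
        exact sum_congr rfl fun y _ => sum_congr rfl fun x _ => by ring
    _ ≤ ∑ y with 0 ≤ ∑ x ∈ X', B x y, ∑ x ∈ X', B x y := sum_mul_le_sum_filter_nonneg hv _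
    _ = _ := sum_comm

theorem le_pow_succ_sub_mul {α θ t V : ℝ} {L : ℕ} (hα : 0 ≤ α) (hθ : 0 ≤ θ)
    (ht : (1 + θ) * α ≤ t) (hV : V ≤ t ^ L) :
    θ / 2 * α ^ (L + 1) ≤ t ^ (L + 1) - (1 + θ / 2) * α * V := by
  have hαt : α ≤ t := by nlinarith [mul_nonneg hθ hα]
  calc θ / 2 * α ^ (L + 1) = α ^ L * (θ / 2 * α) := by ring
    _ ≤ t ^ L * (t - (1 + θ / 2) * α) :=
        mul_le_mul (pow_le_pow_left₀ hα hαt L) (by linarith) (by positivity)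
          (pow_nonneg (hα.trans hαt) L)
    _ = t ^ (L + 1) - (1 + θ / 2) * α * t ^ L := by ring
    _ ≤ t ^ (L + 1) - (1 + θ / 2) * α * V := by gcongr

theorem two_rpow_neg_le {δ ε r : ℝ} {L : ℕ} (hδ : 0 < δ) (hε : 0 < ε)
    (hr : ((L : ℝ) + 1) * Real.logb 2 (1 / δ) + Real.logb 2 (1 / ε) ≤ r) :
    (2 : ℝ) ^ (-r) ≤ ε * δ ^ (L + 1) := by
  rw [← Real.le_logb_iff_rpow_le one_lt_two (by positivity),
    Real.logb_mul hε.ne' (by positivity), Real.logb_pow]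
  simp only [one_div, Real.logb_inv] at hr
  push_cast
  linarith

section Grid

variable {X Y : Type*} [Fintype Y] {A : X × Y → ℝ}

variable (A) in
/-- Reading `A` as a weighted bipartite graph, the density of the common neighbourhood of the
vertices `xv i`. -/
noncomputable def codegree {m : ℕ} (xv : Fin m → X) : ℝ :=
  𝔼 y, ∏ i, A (xv i, y)

theorem codegree_nonneg (hA : ∀ p, 0 ≤ A p) {m : ℕ} (xv : Fin m → X) : 0 ≤ codegree A xv :=
  expect_nonneg fun _ _ => prod_nonneg fun _ _ => hA _

variable [Fintype X]

variable (A) in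
theorem gridU_eq_expect (l k : ℕ) :
    gridU A l k = 𝔼 xv : Fin l → X, 𝔼 yv : Fin k → Y, ∏ i, ∏ j, A (xv i, yv j) := by
  simp only [gridU, Fintype.expect_eq_sum_div_card, ← sum_div, div_div, Fintype.card_fun,
    Fintype.card_fin, Nat.cast_pow, mul_comm]

variable (A) in
theorem gridU_eq_expect_codegree_pow (l k : ℕ) :
    gridU A l k = 𝔼 xv : Fin l → X, codegree A xv ^ k := by
  classical
  simp only [gridU_eq_expect, codegree, expect_pow, Fintype.piFinset_univ]
  exact expect_congr rfl fun xv _ => expect_congr rfl fun yv _ => prod_comm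

variable (A) in
theorem gridU_eq_expect_pow (l k : ℕ) :
    gridU A l k = 𝔼 yv : Fin k → Y, (𝔼 x, ∏ j, A (x, yv j)) ^ l := by
  classical
  simp only [gridU_eq_expect, expect_pow, Fintype.piFinset_univ]
  exact expect_comm _ _ _

theorem gridU_nonneg (hA : ∀ p, 0 ≤ A p) (l k : ℕ) : 0 ≤ gridU A l k := by
  rw [gridU_eq_expect_codegree_pow]
  exact expect_nonneg fun xv _ => pow_nonneg (codegree_nonneg hA xv) k

theorem gridNorm_pow (hA : ∀ p, 0 ≤ A p) {l k : ℕ} (hl : 0 < l) (hk : 0 < k) :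
    gridNorm A l k ^ (l * k) = gridU A l k := by
  rw [gridNorm, abs_of_nonneg (gridU_nonneg hA l k), one_div, ← Nat.cast_mul,
    Real.rpow_inv_natCast_pow (gridU_nonneg hA l k) (by positivity)]

/-- `‖A‖_{U(m,k)} ≤ ‖A‖_{U(m+1,k)}`. -/
theorem gridU_pow_succ_le [Nonempty Y] (hA : ∀ p, 0 ≤ A p) (m k : ℕ) :
    gridU A m k ^ (m + 1) ≤ gridU A (m + 1) k ^ m := by
  have h := expect_pow_mul_pow_succ_le (F := fun yv : Fin k → Y => 𝔼 x, ∏ j, A (x, yv j))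
    (G := fun _ => 1) (fun _ => expect_nonneg fun _ _ => prod_nonneg fun _ _ => hA _)
    (fun _ => zero_le_one) m
  simpa only [mul_one, one_pow, Fintype.expect_one, ← gridU_eq_expect_pow] using h

variable (A) in
theorem gridU_succ_succ_eq (m n : ℕ) :
    gridU A (m + 1) (n + 1) = 𝔼 xv : Fin m → X, 𝔼 yv : Fin n → Y, (∏ i, ∏ j, A (xv i, yv j)) *
      𝔼 x, 𝔼 y, A (x, y) * ((∏ j, A (x, yv j)) * ∏ i, A (xv i, y)) := by
  simp only [gridU_eq_expect, expect_pi_fin_succ, Fin.prod_univ_succ, Fin.cons_zero,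
    Fin.cons_succ, mul_expect]
  simp only [expect_comm (univ : Finset Y) (univ : Finset (Fin n → Y)),
    expect_comm (univ : Finset X) (univ : Finset (Fin n → Y)),
    expect_comm (univ : Finset X) (univ : Finset (Fin m → X))]
  refine expect_congr rfl fun xv _ => expect_congr rfl fun yv _ =>
    expect_congr rfl fun x _ => expect_congr rfl fun y _ => ?_
  rw [prod_mul_distrib]
  ring

variable (A) in
theorem expect_codegree_pow_mul_codegree_tail (m n : ℕ) :
    𝔼 xv : Fin (m + 1) → X, codegree A xv ^ n * codegree A (Fin.tail xv) =
      𝔼 xv : Fin m → X, 𝔼 yv : Fin n → Y,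
        (∏ i, ∏ j, A (xv i, yv j)) * 𝔼 x, 𝔼 y, (∏ j, A (x, yv j)) * ∏ i, A (xv i, y) := by
  classical
  simp only [expect_pi_fin_succ, Fin.tail_cons, codegree, Fin.prod_univ_succ, Fin.cons_zero,
    Fin.cons_succ, expect_pow, Fintype.piFinset_univ, expect_mul, mul_expect]
  simp only [expect_comm (univ : Finset X) (univ : Finset (Fin m → X)),
    expect_comm (univ : Finset Y) (univ : Finset (Fin n → Y)),
    expect_comm (univ : Finset X) (univ : Finset (Fin n → Y))]
  refine expect_congr rfl fun xv _ => expect_congr rfl fun yv _ =>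
    expect_congr rfl fun x _ => expect_congr rfl fun y _ => ?_
  rw [prod_mul_distrib, prod_comm]
  ring

theorem expect_codegree_pow_mul_codegree_tail_pow_le [Nonempty X] [Nonempty Y]
    (hA : ∀ p, 0 ≤ A p) (m n : ℕ) :
    (𝔼 xv : Fin (m + 1) → X, codegree A xv ^ n * codegree A (Fin.tail xv)) ^ ((m + 1) * (n + 1))
      ≤ gridU A (m + 1) (n + 1) ^ (m * (n + 1) + n) := by
  set V := 𝔼 xv : Fin (m + 1) → X, codegree A xv ^ n * codegree A (Fin.tail xv)
  set U := gridU A (m + 1) (n + 1)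
  have hV : 0 ≤ V := expect_nonneg fun xv _ =>
    mul_nonneg (pow_nonneg (codegree_nonneg hA xv) n) (codegree_nonneg hA _)
  have holder : V ^ (n + 1) ≤ U ^ n * gridU A m (n + 1) := by
    have h := expect_pow_mul_pow_succ_le (codegree_nonneg hA)
      (fun xv : Fin (m + 1) → X => codegree_nonneg hA (Fin.tail xv)) n
    rw [← gridU_eq_expect_codegree_pow, expect_pi_fin_succ (fun xv => _ ^ (n + 1))] at h
    simpa only [Fin.tail_cons, Fintype.expect_const, ← gridU_eq_expect_codegree_pow] using h
  calc V ^ ((m + 1) * (n + 1)) = (V ^ (n + 1)) ^ (m + 1) := by ring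
    _ ≤ (U ^ n * gridU A m (n + 1)) ^ (m + 1) := pow_le_pow_left₀ (pow_nonneg hV _) holder _
    _ = U ^ (n * (m + 1)) * gridU A m (n + 1) ^ (m + 1) := by ring
    _ ≤ U ^ (n * (m + 1)) * U ^ m := by
        gcongr
        · exact pow_nonneg (gridU_nonneg hA _ _) _
        · exact gridU_pow_succ_le hA m (n + 1)
    _ = U ^ (m * (n + 1) + n) := by ring

variable (A) in
theorem gridU_succ_succ_sub_mul_eq (m n : ℕ) (c : ℝ) :
    gridU A (m + 1) (n + 1) -
        c * 𝔼 xv : Fin (m + 1) → X, codegree A xv ^ n * codegree A (Fin.tail xv) =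
      𝔼 xv : Fin m → X, 𝔼 yv : Fin n → Y, 𝔼 x, 𝔼 y,
        (A (x, y) - c) * ((∏ i, ∏ j, A (xv i, yv j)) * ∏ j, A (x, yv j)) * ∏ i, A (xv i, y) := by
  simp only [gridU_succ_succ_eq, expect_codegree_pow_mul_codegree_tail, mul_expect,
    ← expect_sub_distrib]
  refine expect_congr rfl fun xv _ => expect_congr rfl fun yv _ =>
    expect_congr rfl fun x _ => expect_congr rfl fun y _ => ?_
  ring

end Grid

section Sifting

variable {X Y : Type*} [Fintype X] [Fintype Y] [Nonempty X] [Nonempty Y] {A : X × Y → ℝ}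

theorem exists_rectangle_sum_sub_ge (hA : ∀ p, 0 ≤ A p ∧ A p ≤ 1) {θ : ℝ} (hθ : 0 ≤ θ)
    {l k : ℕ} (hl : 0 < l) (hk : 0 < k) (hnorm : (1 + θ) * eavg A ≤ gridNorm A l k) :
    ∃ (X' : Finset X) (Y' : Finset Y),
      θ / 2 * eavg A ^ (l * k) * (Fintype.card X * Fintype.card Y) ≤
        ∑ x ∈ X', ∑ y ∈ Y', (A (x, y) - (1 + θ / 2) * eavg A) := by
  obtain ⟨m, rfl⟩ := Nat.exists_eq_add_one_of_ne_zero hl.ne'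
  obtain ⟨n, rfl⟩ := Nat.exists_eq_add_one_of_ne_zero hk.ne'
  have hA0 : ∀ p, 0 ≤ A p := fun p => (hA p).1
  have hα : 0 ≤ eavg A := by rw [eavg_eq_expect]; exact expect_nonneg fun p _ => hA0 p
  set c := (1 + θ / 2) * eavg A
  set V := 𝔼 xv : Fin (m + 1) → X, codegree A xv ^ n * codegree A (Fin.tail xv)
  have hV : V ≤ gridNorm A (m + 1) (n + 1) ^ (m * (n + 1) + n) := by
    have hV0 : 0 ≤ V := expect_nonneg fun xv _ =>
      mul_nonneg (pow_nonneg (codegree_nonneg hA0 xv) n) (codegree_nonneg hA0 _)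
    have ht : 0 ≤ gridNorm A (m + 1) (n + 1) := Real.rpow_nonneg (abs_nonneg _) _
    rw [← pow_le_pow_iff_left₀ hV0 (pow_nonneg ht _) (by positivity : (m + 1) * (n + 1) ≠ 0),
      pow_right_comm, gridNorm_pow hA0 hl hk]
    exact expect_codegree_pow_mul_codegree_tail_pow_le hA0 m n
  have key := le_pow_succ_sub_mul hα hθ hnorm hV
  rw [show m * (n + 1) + n + 1 = (m + 1) * (n + 1) by ring, gridNorm_pow hA0 hl hk,
    gridU_succ_succ_sub_mul_eq] at key
  obtain ⟨xv, -, hxv⟩ := exists_le_of_le_expect univ_nonempty key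
  obtain ⟨yv, -, hyv⟩ := exists_le_of_le_expect univ_nonempty hxv
  have hA01 : ∀ {ι : Type} (f : ι → X × Y) (s : Finset ι),
      0 ≤ ∏ i ∈ s, A (f i) ∧ ∏ i ∈ s, A (f i) ≤ 1 :=
    fun f s => prod_nonneg_and_le_one s fun i => hA (f i)
  have hC := prod_nonneg_and_le_one univ fun i => hA01 (fun j => (xv i, yv j)) univ
  obtain ⟨X', Y', hR⟩ := exists_sum_sum_mul_mul_le (fun x y => A (x, y) - c)
    (fun x => ⟨mul_nonneg hC.1 (hA01 _ _).1, mul_le_one₀ hC.2 (hA01 _ _).1 (hA01 _ _).2⟩)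
    (fun y => hA01 (fun i => (xv i, y)) univ)
  refine ⟨X', Y', ?_⟩
  simp only [Fintype.expect_eq_sum_div_card, ← sum_div, div_div] at hyv
  rw [le_div_iff₀ (by positivity)] at hyv
  linarith

theorem exists_rectangle_density_gt (hA : ∀ p, 0 ≤ A p ∧ A p ≤ 1) {θ : ℝ} (hθ : 0 < θ)
    (hα : 0 < eavg A) {l k : ℕ} (hl : 0 < l) (hk : 0 < k)
    (hnorm : (1 + θ) * eavg A ≤ gridNorm A l k) :
    ∃ (X' : Finset X) (Y' : Finset Y),
      θ / 2 * eavg A ^ (l * k) ≤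
          ((X'.card : ℝ) * Y'.card) / ((Fintype.card X : ℝ) * Fintype.card Y) ∧
        (1 + θ / 2) * eavg A < (∑ x ∈ X', ∑ y ∈ Y', A (x, y)) / ((X'.card : ℝ) * Y'.card) := by
  obtain ⟨X', Y', h⟩ := exists_rectangle_sum_sub_ge hA hθ.le hl hk hnorm
  set c := (1 + θ / 2) * eavg A
  have hN : (0 : ℝ) < Fintype.card X * Fintype.card Y := by positivity
  have hM : 0 < θ / 2 * eavg A ^ (l * k) * (Fintype.card X * Fintype.card Y) := by positivity
  have hsum : ∑ x ∈ X', ∑ y ∈ Y', (A (x, y) - c) =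
      ∑ x ∈ X', ∑ y ∈ Y', A (x, y) - X'.card * Y'.card * c := by
    simp only [sum_sub_distrib, sum_const, nsmul_eq_mul]
    ring
  have hle : ∑ x ∈ X', ∑ y ∈ Y', (A (x, y) - c) ≤ X'.card * Y'.card := by
    have hc : 0 ≤ c := by positivity
    calc ∑ x ∈ X', ∑ y ∈ Y', (A (x, y) - c) ≤ ∑ x ∈ X', ∑ y ∈ Y', (1 : ℝ) :=
          sum_le_sum fun x _ => sum_le_sum fun y _ => by linarith [(hA (x, y)).2]
      _ = X'.card * Y'.card := by simp
  have hR : (0 : ℝ) < X'.card * Y'.card := by linarith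
  exact ⟨X', Y', by rw [le_div_iff₀ hN]; linarith, by rw [lt_div_iff₀ hR]; linarith⟩

end Sifting

/-- sifting a rectangle: (a) if the grid norm of `A` notably exceeds
its density then some large rectangle has notably increased density; (b) consequently,
spread functions have controlled grid norms. -/
theorem sifting :
    ∀ (X Y : Type) [Fintype X] [Fintype Y], Nonempty X → Nonempty Y →
      ∀ (A : X × Y → ℝ) (δ ε : ℝ) (l k : ℕ),
        (∀ p, 0 ≤ A p ∧ A p ≤ 1) → 0 < δ → δ < 1 → 0 < ε → ε < 1 →
        0 < l → 0 < k →
        δ ≤ eavg (fun p => |A p|) →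
        (((1 + ε) * eavg (fun p => |A p|) ≤ gridNorm A l k →
            ∃ (X' : Finset X) (Y' : Finset Y),
              (1 + ε / 2) * eavg (fun p => |A p|) ≤
                (∑ x ∈ X', ∑ y ∈ Y', A (x, y)) / ((X'.card : ℝ) * Y'.card) ∧
              1 / 2 * ε * δ ^ (l * k + 1) ≤
                ((X'.card : ℝ) * Y'.card) / ((Fintype.card X : ℝ) * Fintype.card Y)) ∧
          ∀ r : ℝ,
            ((l : ℝ) * k + 1) * Real.logb 2 (1 / δ) + Real.logb 2 (1 / ε) ≤ r →
            Spread A r ε →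
            gridNorm A l k ≤ (1 + 2 * ε) * eavg (fun p => |A p|)) := by
  intro X Y _ _ _ _ A δ ε l k hA hδ hδ1 hε _ hl hk hδα
  have habs : (fun p => |A p|) = A := funext fun p => abs_of_nonneg (hA p).1
  rw [habs] at hδα ⊢
  have hα : 0 < eavg A := hδ.trans_le hδα
  have hδα_pow : δ ^ (l * k + 1) ≤ eavg A ^ (l * k) :=
    (pow_le_pow_of_le_one hδ.le hδ1.le (Nat.le_succ _)).trans (pow_le_pow_left₀ hδ.le hδα _)
  refine ⟨fun hnorm => ?_, fun r hr hspread => ?_⟩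
  · obtain ⟨X', Y', hsize, hdens⟩ := exists_rectangle_density_gt hA hε hα hl hk hnorm
    refine ⟨X', Y', hdens.le, le_trans ?_ hsize⟩
    linarith [mul_le_mul_of_nonneg_left hδα_pow hε.le]
  · by_contra! hnorm
    obtain ⟨X', Y', hsize, hdens⟩ :=
      exists_rectangle_density_gt hA (by positivity : 0 < 2 * ε) hα hl hk hnorm.le
    have h2r := two_rpow_neg_le (L := l * k) hδ hε (by push_cast; exact hr)
    have hN : (0 : ℝ) < Fintype.card X * Fintype.card Y := by positivity
    have hlarge : (2 : ℝ) ^ (-r) * (Fintype.card X * Fintype.card Y) ≤ X'.card * Y'.card := by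
      rw [← le_div_iff₀ hN]
      linarith [mul_le_mul_of_nonneg_left hδα_pow hε.le]
    have := hspread X' Y' hlarge
    linarith
end

section
/- There exists an absolute constant C > 0 with the following property. Let N be a positive integer, γ ∈ (0,1), let D ⊆ [N]³ be nonempty and γ-pseudorandom with respect to a cube C = X×Y×Z ⊆ [N]³ (with X, Y, Z nonempty), and let T ⊆ D. Define h : X×Y → [0,1] by h(x,y) = (E_{z∈Z} T(x,y,z))/(E_{z∈Z} D(x,y,z)) when E_{z∈Z} D(x,y,z) > 0, and h(x,y) = 0 otherwise. Then |E_{(x,y)∈X×Y}[h(x,y)] − |T ∩ C|/|D ∩ C|| ≤ C·γ^{1/3}. -/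
open Finset

/-- Indicator function of a set `D ⊆ [N]³`. -/
def ind {N : ℕ} (D : Finset (Fin N × Fin N × Fin N)) (x y z : Fin N) : ℝ :=
  if (x, y, z) ∈ D then 1 else 0

/-- Density `μ = |D|/N³` of a set `D ⊆ [N]³`. -/
noncomputable def density {N : ℕ} (D : Finset (Fin N × Fin N × Fin N)) : ℝ :=
  (D.card : ℝ) / (N : ℝ) ^ 3

/-- `a = b(1 ± γ)`, i.e. `b(1-γ) ≤ a ≤ b(1+γ)`. -/
def Approx (a b γ : ℝ) : Prop := b * (1 - γ) ≤ a ∧ a ≤ b * (1 + γ)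

/-- `E_{(x,y,z) ∈ X×Y×Z}[D(x,y,z)]`. -/
noncomputable def avg1 {N : ℕ} (D : Finset (Fin N × Fin N × Fin N))
    (X Y Z : Finset (Fin N)) : ℝ :=
  (∑ x ∈ X, ∑ y ∈ Y, ∑ z ∈ Z, ind D x y z) / ((X.card : ℝ) * Y.card * Z.card)

/-- `E_{(x,y,z,z') ∈ X×Y×Z×Z}[D(x,y,z)·D(x,y,z')]`. -/
noncomputable def avg2Z {N : ℕ} (D : Finset (Fin N × Fin N × Fin N))
    (X Y Z : Finset (Fin N)) : ℝ :=
  (∑ x ∈ X, ∑ y ∈ Y, ∑ z ∈ Z, ∑ z' ∈ Z, ind D x y z * ind D x y z') /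
    ((X.card : ℝ) * Y.card * Z.card * Z.card)

/-- `E_{(x,x',y,z) ∈ X×X×Y×Z}[D(x,y,z)·D(x',y,z)]`. -/
noncomputable def avg2X {N : ℕ} (D : Finset (Fin N × Fin N × Fin N))
    (X Y Z : Finset (Fin N)) : ℝ :=
  (∑ x ∈ X, ∑ x' ∈ X, ∑ y ∈ Y, ∑ z ∈ Z, ind D x y z * ind D x' y z) /
    ((X.card : ℝ) * X.card * Y.card * Z.card)

/-- `E_{(x,y,y',z) ∈ X×Y×Y×Z}[D(x,y,z)·D(x,y',z)]`. -/
noncomputable def avg2Y {N : ℕ} (D : Finset (Fin N × Fin N × Fin N))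
    (X Y Z : Finset (Fin N)) : ℝ :=
  (∑ x ∈ X, ∑ y ∈ Y, ∑ y' ∈ Y, ∑ z ∈ Z, ind D x y z * ind D x y' z) /
    ((X.card : ℝ) * Y.card * Y.card * Z.card)

/-- `D` is `γ`-pseudorandom with respect to the cube `X × Y × Z`. -/
def PseudorandomCube {N : ℕ} (D : Finset (Fin N × Fin N × Fin N)) (γ : ℝ)
    (X Y Z : Finset (Fin N)) : Prop :=
  Approx (avg1 D X Y Z) (density D) γ ∧
  Approx (avg2Z D X Y Z) (density D ^ 2) γ ∧
  Approx (avg2X D X Y Z) (density D ^ 2) γ ∧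
  Approx (avg2Y D X Y Z) (density D ^ 2) γ

/-- `D` is `γ`-pseudorandom with respect to all cubes of size at least `γ·N³`. -/
def PseudorandomLargeCubes {N : ℕ} (D : Finset (Fin N × Fin N × Fin N)) (γ : ℝ) : Prop :=
  ∀ X Y Z : Finset (Fin N),
    γ * (N : ℝ) ^ 3 ≤ (X.card : ℝ) * Y.card * Z.card →
    PseudorandomCube D γ X Y Z

/-!
Write `g(x,y) = E_z D(x,y,z)`, `f(x,y) = E_z T(x,y,z)` and `μ` for the density of `D`, so that
`0 ≤ f ≤ g` and `h = f / g`. Pseudorandomness says `E g = μ(1 ± γ)` and `E g² ≤ μ²(1 + γ)`, hence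
`E (g - μ)² ≤ 3γμ²`. Pointwise `|f/g - f/μ| ≤ |g - μ| / μ`, so by Cauchy–Schwarz `E h` lies within
`√(3γ)` of `E f / μ`, which in turn lies within `γ` of `E f / E g = |T ∩ C| / |D ∩ C|`.
Finally `√(3γ) + γ ≤ 3γ^{1/3}` for `γ ≤ 1`.
-/

lemma abs_div_sub_div_le_of_le {a b c : ℝ} (ha : 0 ≤ a) (hab : a ≤ b) (hb : 0 < b) (hc : 0 < c) :
    |a / b - a / c| ≤ |b - c| / c := by
  have hsplit : a / b - a / c = a / b * ((c - b) / c) := by field_simp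
  rw [hsplit, abs_mul, abs_of_nonneg (div_nonneg ha hb.le), abs_div, abs_of_pos hc, abs_sub_comm]
  exact mul_le_of_le_one_left (by positivity) ((div_le_one hb).2 hab)

lemma abs_ite_div_sub_div_le {a b c : ℝ} (ha : 0 ≤ a) (hab : a ≤ b) (hc : 0 < c) :
    |(if 0 < b then a / b else 0) - a / c| ≤ |b - c| / c := by
  split_ifs with hb
  · exact abs_div_sub_div_le_of_le ha hab hb hc
  · simp [le_antisymm (hab.trans (not_lt.1 hb)) ha]
    positivity

section MeanOfRatios

variable {ι : Type*} {s : Finset ι} {f g : ι → ℝ} {μ γ : ℝ}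

lemma sum_sub_sq_le (hμ : 0 ≤ μ) (hA : |∑ i ∈ s, g i - s.card * μ| ≤ γ * (s.card * μ))
    (hB : ∑ i ∈ s, g i ^ 2 ≤ s.card * μ ^ 2 * (1 + γ)) :
    ∑ i ∈ s, (g i - μ) ^ 2 ≤ 3 * γ * s.card * μ ^ 2 := by
  have hexpand : ∑ i ∈ s, (g i - μ) ^ 2 =
      ∑ i ∈ s, g i ^ 2 - 2 * μ * ∑ i ∈ s, g i + s.card * μ ^ 2 := by
    simp only [sub_sq, Finset.sum_add_distrib, Finset.sum_sub_distrib, Finset.mul_sum,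
      Finset.sum_const, nsmul_eq_mul]
    congr 2
    exact Finset.sum_congr rfl fun i _ => by ring
  have hlower := mul_le_mul_of_nonneg_left (abs_le.1 hA).1 (by positivity : 0 ≤ 2 * μ)
  rw [hexpand]
  nlinarith

lemma sum_abs_sub_le (hμ : 0 ≤ μ) (hA : |∑ i ∈ s, g i - s.card * μ| ≤ γ * (s.card * μ))
    (hB : ∑ i ∈ s, g i ^ 2 ≤ s.card * μ ^ 2 * (1 + γ)) :
    ∑ i ∈ s, |g i - μ| ≤ s.card * μ * √(3 * γ) := by
  have hCS : (∑ i ∈ s, |g i - μ|) ^ 2 ≤ (s.card * μ) ^ 2 * (3 * γ) := by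
    calc (∑ i ∈ s, |g i - μ|) ^ 2 ≤ s.card * (∑ i ∈ s, |g i - μ| ^ 2) := sq_sum_le_card_mul_sum_sq
      _ = s.card * (∑ i ∈ s, (g i - μ) ^ 2) := by simp only [sq_abs]
      _ ≤ s.card * (3 * γ * s.card * μ ^ 2) := by gcongr; exact sum_sub_sq_le hμ hA hB
      _ = (s.card * μ) ^ 2 * (3 * γ) := by ring
  calc ∑ i ∈ s, |g i - μ| ≤ |(∑ i ∈ s, |g i - μ|)| := le_abs_self _
    _ ≤ √((s.card * μ) ^ 2 * (3 * γ)) := Real.abs_le_sqrt hCS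
    _ = s.card * μ * √(3 * γ) := by
      rw [Real.sqrt_mul (sq_nonneg _), Real.sqrt_sq (by positivity)]

lemma abs_mean_ite_div_sub_le (hs : s.Nonempty) (hμ : 0 < μ) (hf0 : ∀ i ∈ s, 0 ≤ f i)
    (hfg : ∀ i ∈ s, f i ≤ g i) (hA : |∑ i ∈ s, g i - s.card * μ| ≤ γ * (s.card * μ))
    (hB : ∑ i ∈ s, g i ^ 2 ≤ s.card * μ ^ 2 * (1 + γ)) :
    |(∑ i ∈ s, if 0 < g i then f i / g i else 0) / s.card - (∑ i ∈ s, f i) / (s.card * μ)| ≤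
      √(3 * γ) := by
  have hm : (0 : ℝ) < s.card := by exact_mod_cast hs.card_pos
  rw [← div_div, div_right_comm, Finset.sum_div _ _ μ, ← sub_div, ← Finset.sum_sub_distrib,
    abs_div, abs_of_pos hm, div_le_iff₀ hm]
  calc |∑ i ∈ s, ((if 0 < g i then f i / g i else 0) - f i / μ)|
      ≤ ∑ i ∈ s, |(if 0 < g i then f i / g i else 0) - f i / μ| := Finset.abs_sum_le_sum_abs _ _
    _ ≤ ∑ i ∈ s, |g i - μ| / μ :=
      Finset.sum_le_sum fun i hi => abs_ite_div_sub_div_le (hf0 i hi) (hfg i hi) hμ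
    _ = (∑ i ∈ s, |g i - μ|) / μ := (Finset.sum_div _ _ _).symm
    _ ≤ s.card * μ * √(3 * γ) / μ := by gcongr; exact sum_abs_sub_le hμ.le hA hB
    _ = √(3 * γ) * s.card := by field_simp

lemma abs_div_sub_sum_div_sum_le (hs : s.Nonempty) (hμ : 0 < μ) (hγ : γ < 1)
    (hf0 : ∀ i ∈ s, 0 ≤ f i) (hfg : ∀ i ∈ s, f i ≤ g i)
    (hA : |∑ i ∈ s, g i - s.card * μ| ≤ γ * (s.card * μ)) :
    |(∑ i ∈ s, f i) / (s.card * μ) - (∑ i ∈ s, f i) / (∑ i ∈ s, g i)| ≤ γ := by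
  have hM : (0 : ℝ) < s.card * μ := mul_pos (by exact_mod_cast hs.card_pos) hμ
  have hG : 0 < ∑ i ∈ s, g i := by
    nlinarith [(abs_le.1 hA).1, mul_pos (sub_pos.2 hγ) hM]
  rw [abs_sub_comm]
  calc _ ≤ |∑ i ∈ s, g i - s.card * μ| / (s.card * μ) :=
        abs_div_sub_div_le_of_le (Finset.sum_nonneg hf0) (Finset.sum_le_sum hfg) hG hM
    _ ≤ γ := (div_le_iff₀ hM).2 hA

theorem abs_mean_ite_div_sub_sum_div_sum_le (hs : s.Nonempty) (hμ : 0 < μ) (hγ : γ < 1)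
    (hf0 : ∀ i ∈ s, 0 ≤ f i) (hfg : ∀ i ∈ s, f i ≤ g i)
    (hA : Approx ((∑ i ∈ s, g i) / s.card) μ γ)
    (hB : (∑ i ∈ s, g i ^ 2) / s.card ≤ μ ^ 2 * (1 + γ)) :
    |(∑ i ∈ s, if 0 < g i then f i / g i else 0) / s.card -
        (∑ i ∈ s, f i) / (∑ i ∈ s, g i)| ≤ √(3 * γ) + γ := by
  have hm : (0 : ℝ) < s.card := by exact_mod_cast hs.card_pos
  have hA' : |∑ i ∈ s, g i - s.card * μ| ≤ γ * (s.card * μ) := by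
    have hlower := (le_div_iff₀ hm).1 hA.1
    have hupper := (div_le_iff₀ hm).1 hA.2
    exact abs_le.2 ⟨by linarith, by linarith⟩
  have hB' : ∑ i ∈ s, g i ^ 2 ≤ s.card * μ ^ 2 * (1 + γ) := by
    linarith [(div_le_iff₀ hm).1 hB]
  calc _ ≤ |(∑ i ∈ s, if 0 < g i then f i / g i else 0) / s.card -
          (∑ i ∈ s, f i) / (s.card * μ)| +
        |(∑ i ∈ s, f i) / (s.card * μ) - (∑ i ∈ s, f i) / (∑ i ∈ s, g i)| := abs_sub_le _ _ _
    _ ≤ √(3 * γ) + γ := add_le_add (abs_mean_ite_div_sub_le hs hμ hf0 hfg hA' hB')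
        (abs_div_sub_sum_div_sum_le hs hμ hγ hf0 hfg hA')

end MeanOfRatios

lemma sqrt_three_mul_add_le_rpow {γ : ℝ} (hγ0 : 0 < γ) (hγ1 : γ ≤ 1) :
    √(3 * γ) + γ ≤ 3 * γ ^ ((1 : ℝ) / 3) := by
  have hsqrt : √γ ≤ γ ^ ((1 : ℝ) / 3) := by
    rw [Real.sqrt_eq_rpow]
    exact Real.rpow_le_rpow_of_exponent_ge hγ0 hγ1 (by norm_num)
  have hself : γ ≤ γ ^ ((1 : ℝ) / 3) := by
    simpa using Real.rpow_le_rpow_of_exponent_ge hγ0 hγ1 (by norm_num : (1 : ℝ) / 3 ≤ 1)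
  have hsqrt3 : √3 ≤ 2 := (Real.sqrt_le_left (by norm_num)).2 (by norm_num)
  rw [Real.sqrt_mul (by norm_num)]
  nlinarith [Real.sqrt_nonneg 3, Real.sqrt_nonneg γ]

section Cube

variable {N : ℕ}

lemma ind_nonneg (D : Finset (Fin N × Fin N × Fin N)) (x y z : Fin N) : 0 ≤ ind D x y z := by
  unfold ind; split_ifs <;> norm_num

lemma ind_mono {D T : Finset (Fin N × Fin N × Fin N)} (hTD : T ⊆ D) (x y z : Fin N) :
    ind T x y z ≤ ind D x y z := by
  by_cases hT : (x, y, z) ∈ T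
  · simp [ind, hT, hTD hT]
  · unfold ind
    split_ifs <;> norm_num

lemma card_filter_mem_cube_eq_sum_ind (D : Finset (Fin N × Fin N × Fin N))
    (X Y Z : Finset (Fin N)) :
    ((D.filter fun p => p.1 ∈ X ∧ p.2.1 ∈ Y ∧ p.2.2 ∈ Z).card : ℝ) =
      ∑ x ∈ X, ∑ y ∈ Y, ∑ z ∈ Z, ind D x y z := by
  have hfilter : (D.filter fun p => p.1 ∈ X ∧ p.2.1 ∈ Y ∧ p.2.2 ∈ Z) =
      (X ×ˢ Y ×ˢ Z).filter (· ∈ D) := by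
    ext p
    simp only [Finset.mem_filter, Finset.mem_product]
    tauto
  rw [hfilter, Finset.card_filter, Nat.cast_sum, Finset.sum_product]
  simp only [Finset.sum_product, ind, Nat.cast_ite, Nat.cast_one, Nat.cast_zero]

noncomputable def fiberMean (D : Finset (Fin N × Fin N × Fin N)) (Z : Finset (Fin N))
    (p : Fin N × Fin N) : ℝ :=
  (∑ z ∈ Z, ind D p.1 p.2 z) / Z.card

lemma fiberMean_nonneg (D : Finset (Fin N × Fin N × Fin N)) (Z : Finset (Fin N))
    (p : Fin N × Fin N) : 0 ≤ fiberMean D Z p :=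
  div_nonneg (Finset.sum_nonneg fun z _ => ind_nonneg D _ _ z) (Nat.cast_nonneg _)

lemma fiberMean_mono {D T : Finset (Fin N × Fin N × Fin N)} (hTD : T ⊆ D) (Z : Finset (Fin N))
    (p : Fin N × Fin N) :
    fiberMean T Z p ≤ fiberMean D Z p :=
  div_le_div_of_nonneg_right (Finset.sum_le_sum fun z _ => ind_mono hTD _ _ z) (Nat.cast_nonneg _)

lemma sum_fiberMean (D : Finset (Fin N × Fin N × Fin N)) (X Y Z : Finset (Fin N)) :
    ∑ p ∈ X ×ˢ Y, fiberMean D Z p =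
      ((D.filter fun p => p.1 ∈ X ∧ p.2.1 ∈ Y ∧ p.2.2 ∈ Z).card : ℝ) / Z.card := by
  simp only [card_filter_mem_cube_eq_sum_ind, Finset.sum_product, fiberMean, Finset.sum_div]

lemma avg1_eq_sum_fiberMean_div (D : Finset (Fin N × Fin N × Fin N)) (X Y Z : Finset (Fin N)) :
    avg1 D X Y Z = (∑ p ∈ X ×ˢ Y, fiberMean D Z p) / (X ×ˢ Y).card := by
  rw [sum_fiberMean, card_filter_mem_cube_eq_sum_ind, avg1, Finset.card_product, Nat.cast_mul,
    div_div, mul_comm (Z.card : ℝ)]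

lemma avg2Z_eq_sum_fiberMean_sq_div (D : Finset (Fin N × Fin N × Fin N))
    (X Y Z : Finset (Fin N)) :
    avg2Z D X Y Z = (∑ p ∈ X ×ˢ Y, fiberMean D Z p ^ 2) / (X ×ˢ Y).card := by
  have hsq (x y : Fin N) : fiberMean D Z (x, y) ^ 2 =
      (∑ z ∈ Z, ∑ z' ∈ Z, ind D x y z * ind D x y z') / (Z.card * Z.card) := by
    rw [fiberMean, div_pow, sq, sq, Finset.sum_mul_sum]
  simp only [avg2Z, Finset.sum_product, hsq, ← Finset.sum_div, Finset.card_product, Nat.cast_mul,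
    div_div]
  ring

end Cube

/-- the average of `h(x,y) = E_z T(x,y,z) / E_z D(x,y,z)` over a
cube with respect to which `D` is pseudorandom is close to `|T ∩ C| / |D ∩ C|`. -/
theorem approx_h :
    ∃ C₀ : ℝ, 0 < C₀ ∧
      ∀ (N : ℕ) (γ : ℝ) (D T : Finset (Fin N × Fin N × Fin N))
        (X Y Z : Finset (Fin N)),
        0 < N → 0 < γ → γ < 1 →
        D.Nonempty → X.Nonempty → Y.Nonempty → Z.Nonempty →
        PseudorandomCube D γ X Y Z →
        T ⊆ D →
        |(∑ x ∈ X, ∑ y ∈ Y,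
              (if 0 < (∑ z ∈ Z, ind D x y z) / (Z.card : ℝ) then
                ((∑ z ∈ Z, ind T x y z) / (Z.card : ℝ)) /
                  ((∑ z ∈ Z, ind D x y z) / (Z.card : ℝ))
              else 0)) / ((X.card : ℝ) * Y.card) -
            ((T.filter fun p => p.1 ∈ X ∧ p.2.1 ∈ Y ∧ p.2.2 ∈ Z).card : ℝ) /
              ((D.filter fun p => p.1 ∈ X ∧ p.2.1 ∈ Y ∧ p.2.2 ∈ Z).card : ℝ)| ≤
          C₀ * γ ^ ((1 : ℝ) / 3) := by
  refine ⟨3, by norm_num, fun N γ D T X Y Z hN hγ0 hγ1 hD hX hY hZ hPR hTD => ?_⟩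
  have hμ : 0 < density D :=
    div_pos (by exact_mod_cast hD.card_pos) (pow_pos (Nat.cast_pos.2 hN) 3)
  have key := abs_mean_ite_div_sub_sum_div_sum_le (hX.product hY) hμ hγ1
    (fun p _ => fiberMean_nonneg T Z p) (fun p _ => fiberMean_mono hTD Z p)
    (avg1_eq_sum_fiberMean_div D X Y Z ▸ hPR.1)
    (avg2Z_eq_sum_fiberMean_sq_div D X Y Z ▸ hPR.2.1.2)
  rw [sum_fiberMean, sum_fiberMean, div_div_div_cancel_right₀ (by exact_mod_cast hZ.card_pos.ne'),
    Finset.sum_product, Finset.card_product, Nat.cast_mul] at key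
  exact key.trans (sqrt_three_mul_add_le_rpow hγ0 hγ1.le)
end

section
/- There exists an absolute constant c > 0 with the following property. Let Col : [N]×[N] → [M] be an (N,M,η)-expander coloring, let γ ∈ (0,1), and assume η ≤ c·γ³·M^{−5}. Then the set D(Col) = {(x,y,z) ∈ [N]³ : Col(x,y) = Col(x,z) = Col(y,z)} is γ-pseudorandom with respect to large cubes. -/
/-!
Each colour class `Col a b = m` of an expander colouring is a quasirandom relation of density
`δ = 1/M`: every box `s × t` contains `δ #s #t ± η N²` of its pairs, since a box with a side
shorter than `η N` holds fewer than `η N²` pairs anyway. Counting one apex at a time, three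
quasirandom relations contain `δ³ #s #t #w` triangles and `δ⁵ #s #t #w²` diamonds (`K₄` minus
the edge between its two apices), up to errors `O(ε N)` and `O(ε N²)`.

A point of `D` is a triangle of a single colour, and two points of `D` differing in one
coordinate share an edge, hence a colour, and form a monochromatic diamond. So the numerators of
the four averages are sums over the `M` colours of triangle and diamond counts. They equal
`M⁻²` and `M⁻⁴` up to relative errors `O(M³ η / γ²)` and `O(M⁵ η / γ³)` on a cube of size at
least `γ N³`, all of whose sides have length at least `γ N`.
-/

open Finset

/-- `Col : [N]×[N] → [M]` is an `(N,M,η)`-expander coloring. -/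
def IsExpanderColoring (N M : ℕ) (η : ℝ) (Col : Fin N → Fin N → Fin M) : Prop :=
  ∀ X Y : Finset (Fin N), η * N ≤ (X.card : ℝ) → η * N ≤ (Y.card : ℝ) →
    ∀ m : Fin M,
      Approx (((X ×ˢ Y).filter fun p => Col p.1 p.2 = m).card : ℝ)
        ((X.card : ℝ) * Y.card / M) η

open Rel

theorem abs_sum_sub_sum_le_card_mul {ι : Type*} (s : Finset ι) {f g : ι → ℝ} {e : ℝ}
    (h : ∀ i ∈ s, |f i - g i| ≤ e) : |∑ i ∈ s, f i - ∑ i ∈ s, g i| ≤ #s * e := by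
  rw [← sum_sub_distrib, ← nsmul_eq_mul]
  exact (abs_sum_le_sum_abs _ _).trans (sum_le_card_nsmul _ _ _ h)

theorem abs_sub_mul_le_add {x y z k e₁ e₂ : ℝ} (hk : 0 ≤ k) (h₁ : |x - k * y| ≤ e₁)
    (h₂ : |y - z| ≤ e₂) : |x - k * z| ≤ e₁ + k * e₂ :=
  calc |x - k * z| ≤ |x - k * y| + |k * y - k * z| := abs_sub_le _ _ _
    _ ≤ e₁ + k * e₂ := by rw [← mul_sub, abs_mul, abs_of_nonneg hk]; gcongr

theorem abs_div_sub_le_of_abs_sub_le {a S p e θ : ℝ} (hS : 0 < S) (h : |a - S * p| ≤ e)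
    (he : e ≤ θ * S) : |a / S - p| ≤ θ := by
  rw [show a / S - p = (a - S * p) / S by field_simp, abs_div, abs_of_pos hS, div_le_iff₀ hS]
  exact h.trans he

theorem approx_of_abs_sub_le {a b p γ : ℝ} (hγ₀ : 0 ≤ γ) (hγ₁ : γ ≤ 1) (hp : 0 ≤ p)
    (ha : |a - p| ≤ γ / 8 * p) (hb : |b - p| ≤ γ / 8 * p) : Approx a b γ := by
  rw [abs_le] at ha hb
  have hγp := mul_nonneg hγ₀ hp
  constructor
  · nlinarith [mul_le_mul_of_nonneg_right hb.2 (sub_nonneg.2 hγ₁)]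
  · nlinarith [mul_le_mul_of_nonneg_right hb.1 (by linarith : 0 ≤ 1 + γ),
      mul_le_mul_of_nonneg_right hγ₁ hγp]

theorem approx_sq_of_abs_sub_le {a b p γ : ℝ} (hγ₀ : 0 ≤ γ) (hγ₁ : γ ≤ 1) (hp : 0 ≤ p)
    (ha : |a - p ^ 2| ≤ γ / 8 * p ^ 2) (hb : |b - p| ≤ γ / 8 * p) : Approx a (b ^ 2) γ := by
  rw [abs_le] at ha hb
  have hγp := mul_nonneg hγ₀ hp
  have hγp₂ := mul_nonneg hγ₀ (sq_nonneg p)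
  have hb₁ : b ^ 2 ≤ (p * (1 + γ / 8)) ^ 2 := pow_le_pow_left₀ (by nlinarith) (by linarith) 2
  have hb₂ : (p * (1 - γ / 8)) ^ 2 ≤ b ^ 2 := pow_le_pow_left₀ (by nlinarith) (by linarith) 2
  constructor
  · nlinarith [mul_le_mul_of_nonneg_right hb₁ (sub_nonneg.2 hγ₁), mul_nonneg hγ₀ hγp₂]
  · nlinarith [mul_le_mul_of_nonneg_right hb₂ (by linarith : 0 ≤ 1 + γ),
      mul_le_mul_of_nonneg_right hγ₁ hγp₂, mul_nonneg hγ₀ hγp₂,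
      mul_nonneg hγ₀ (mul_nonneg hγ₀ hγp₂)]

theorem card_interedges_eq_sum_left {α β : Type*} (r : α → β → Prop)
    [∀ a, DecidablePred (r a)] (s : Finset α) (t : Finset β) :
    #(interedges r s t) = ∑ a ∈ s, #{b ∈ t | r a b} := by
  simp only [interedges, card_filter, sum_product]

theorem card_interedges_eq_sum_right {α β : Type*} (r : α → β → Prop)
    [∀ a, DecidablePred (r a)] (s : Finset α) (t : Finset β) :
    #(interedges r s t) = ∑ b ∈ t, #{a ∈ s | r a b} := by
  simp only [interedges, card_filter, sum_product_right]

section Quasirandom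

variable {V : Type*}

def IsQuasirandom (r : V → V → Prop) [DecidableRel r] (δ ε : ℝ) : Prop :=
  ∀ s t : Finset V, |(#(interedges r s t) : ℝ) - δ * #s * #t| ≤ ε

namespace IsQuasirandom

variable {r : V → V → Prop} [DecidableRel r] {δ ε : ℝ}

theorem nonneg (h : IsQuasirandom r δ ε) : 0 ≤ ε := by
  simpa using h ∅ ∅

theorem swap (h : IsQuasirandom r δ ε) : IsQuasirandom (fun a b => r b a) δ ε := by
  intro s t
  rw [card_interedges_eq_sum_left, ← card_interedges_eq_sum_right, mul_right_comm]
  exact h t s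

end IsQuasirandom

section Counting

variable {u v r : V → V → Prop} [DecidableRel u] [DecidableRel v] [DecidableRel r]
  {δ ε : ℝ}

def pathCount (u v : V → V → Prop) [DecidableRel u] [DecidableRel v] (s t w : Finset V) : ℕ :=
  ∑ c ∈ w, #{a ∈ s | u a c} * #{b ∈ t | v b c}

def triangleCount (u v r : V → V → Prop) [DecidableRel u] [DecidableRel v] [DecidableRel r]
    (s t w : Finset V) : ℕ :=
  ∑ c ∈ w, #(interedges r {a ∈ s | u a c} {b ∈ t | v b c})

def diamondCount (u v r : V → V → Prop) [DecidableRel u] [DecidableRel v] [DecidableRel r]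
    (s t w : Finset V) : ℕ :=
  ∑ c ∈ w, triangleCount u v r {a ∈ s | u a c} {b ∈ t | v b c} w

theorem pathCount_eq_sum_card_interedges (s t w : Finset V) :
    pathCount u v s t w = ∑ a ∈ s, #(interedges v t {c ∈ w | u a c}) := by
  simp only [card_interedges_eq_sum_right]
  rw [sum_comm' (t' := w) (s' := fun c => {a ∈ s | u a c}) (by aesop)]
  simp only [pathCount, sum_const, smul_eq_mul]

theorem card_interedges_filter_eq_sum (p q : V → Prop) [DecidablePred p] [DecidablePred q]
    (s t : Finset V) :
    (#(interedges r {a ∈ s | p a} {b ∈ t | q b}) : ℝ) =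
      ∑ a ∈ s, ∑ b ∈ t, if p a ∧ q b ∧ r a b then 1 else 0 := by
  simp only [interedges, card_filter, sum_product, sum_filter, ite_and, Nat.cast_sum,
    Nat.cast_ite, Nat.cast_one, Nat.cast_zero]
  refine sum_congr rfl fun a _ => ?_
  split_ifs <;> simp

theorem triangleCount_eq_sum (s t w : Finset V) :
    (triangleCount u v r s t w : ℝ) =
      ∑ c ∈ w, ∑ a ∈ s, ∑ b ∈ t, if u a c ∧ v b c ∧ r a b then 1 else 0 := by
  simp only [triangleCount, Nat.cast_sum, card_interedges_filter_eq_sum]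

theorem diamondCount_eq_sum (s t w : Finset V) :
    (diamondCount u v r s t w : ℝ) =
      ∑ c ∈ w, ∑ c' ∈ w, ∑ a ∈ s, ∑ b ∈ t,
        if (u a c ∧ u a c') ∧ (v b c ∧ v b c') ∧ r a b then 1 else 0 := by
  simp only [diamondCount, triangleCount, filter_filter, Nat.cast_sum,
    card_interedges_filter_eq_sum]

theorem abs_pathCount_sub_le [Fintype V] (hu : IsQuasirandom u δ ε)
    (hv : IsQuasirandom v δ ε) (hδ₀ : 0 ≤ δ) (hδ₁ : δ ≤ 1) (s t w : Finset V) :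
    |(pathCount u v s t w : ℝ) - δ ^ 2 * #s * #t * #w| ≤ 2 * Fintype.card V * ε := by
  have hε := hu.nonneg
  have hs : (#s : ℝ) ≤ Fintype.card V := mod_cast card_le_univ s
  have ht : (#t : ℝ) ≤ Fintype.card V := mod_cast card_le_univ t
  have h₁ : |(pathCount u v s t w : ℝ) - δ * #t * #(interedges u s w)| ≤ #s * ε := by
    rw [pathCount_eq_sum_card_interedges, card_interedges_eq_sum_left u s w]
    push_cast
    rw [mul_sum]
    exact abs_sum_sub_sum_le_card_mul s fun a _ => hv t _
  calc _ = |(pathCount u v s t w : ℝ) - δ * #t * (δ * #s * #w)| := by ring_nf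
    _ ≤ #s * ε + δ * #t * ε := abs_sub_mul_le_add (by positivity) h₁ (hu s w)
    _ ≤ Fintype.card V * ε + Fintype.card V * ε := by
      gcongr
      exact (mul_le_of_le_one_left (by positivity) hδ₁).trans ht
    _ = 2 * Fintype.card V * ε := by ring

theorem abs_triangleCount_sub_le [Fintype V] (hu : IsQuasirandom u δ ε)
    (hv : IsQuasirandom v δ ε) (hr : IsQuasirandom r δ ε) (hδ₀ : 0 ≤ δ) (hδ₁ : δ ≤ 1)
    (s t w : Finset V) :
    |(triangleCount u v r s t w : ℝ) - δ ^ 3 * #s * #t * #w| ≤ 3 * Fintype.card V * ε := by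
  have hε := hu.nonneg
  have hw : (#w : ℝ) ≤ Fintype.card V := mod_cast card_le_univ w
  have h₁ : |(triangleCount u v r s t w : ℝ) - δ * pathCount u v s t w| ≤ #w * ε := by
    simp only [triangleCount, pathCount, Nat.cast_sum, Nat.cast_mul, mul_sum, ← mul_assoc]
    exact abs_sum_sub_sum_le_card_mul w fun c _ => hr _ _
  calc _ = |(triangleCount u v r s t w : ℝ) - δ * (δ ^ 2 * #s * #t * #w)| := by ring_nf
    _ ≤ #w * ε + δ * (2 * Fintype.card V * ε) :=
      abs_sub_mul_le_add hδ₀ h₁ (abs_pathCount_sub_le hu hv hδ₀ hδ₁ s t w)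
    _ ≤ Fintype.card V * ε + 1 * (2 * Fintype.card V * ε) := by gcongr
    _ = 3 * Fintype.card V * ε := by ring

theorem abs_diamondCount_sub_le [Fintype V] (hu : IsQuasirandom u δ ε)
    (hv : IsQuasirandom v δ ε) (hr : IsQuasirandom r δ ε) (hδ₀ : 0 ≤ δ) (hδ₁ : δ ≤ 1)
    (s t w : Finset V) :
    |(diamondCount u v r s t w : ℝ) - δ ^ 5 * #s * #t * #w ^ 2| ≤
      5 * Fintype.card V ^ 2 * ε := by
  have hε := hu.nonneg
  have hw : (#w : ℝ) ≤ Fintype.card V := mod_cast card_le_univ w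
  have h₁ : |(diamondCount u v r s t w : ℝ) - δ ^ 3 * #w * pathCount u v s t w| ≤
      #w * (3 * Fintype.card V * ε) := by
    simp only [diamondCount, pathCount, Nat.cast_sum, Nat.cast_mul, mul_sum]
    refine abs_sum_sub_sum_le_card_mul w fun c _ => ?_
    convert abs_triangleCount_sub_le hu hv hr hδ₀ hδ₁ {a ∈ s | u a c} {b ∈ t | v b c} w
      using 2
    ring
  calc _ = |(diamondCount u v r s t w : ℝ) - δ ^ 3 * #w * (δ ^ 2 * #s * #t * #w)| := by
        ring_nf
    _ ≤ #w * (3 * Fintype.card V * ε) + δ ^ 3 * #w * (2 * Fintype.card V * ε) :=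
      abs_sub_mul_le_add (by positivity) h₁ (abs_pathCount_sub_le hu hv hδ₀ hδ₁ s t w)
    _ ≤ Fintype.card V * (3 * Fintype.card V * ε) +
        1 * Fintype.card V * (2 * Fintype.card V * ε) := by
      gcongr
      exact pow_le_one₀ hδ₀ hδ₁
    _ = 5 * Fintype.card V ^ 2 * ε := by ring

end Counting

end Quasirandom

section ExpanderColoring

variable {N M : ℕ} {η : ℝ} {Col : Fin N → Fin N → Fin M}

theorem IsExpanderColoring.nonneg (h : IsExpanderColoring N M η Col) (hN : 0 < N)
    (hM : 0 < M) : 0 ≤ η := by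
  by_contra! hη
  have hlarge : η * N ≤ (#(univ : Finset (Fin N)) : ℝ) :=
    (mul_nonpos_of_nonpos_of_nonneg hη.le (Nat.cast_nonneg N)).trans (Nat.cast_nonneg _)
  obtain ⟨h₁, h₂⟩ := h univ univ hlarge hlarge ⟨0, hM⟩
  have hb : (0 : ℝ) < #(univ : Finset (Fin N)) * #(univ : Finset (Fin N)) / M := by
    simp only [card_univ, Fintype.card_fin]
    positivity
  nlinarith

theorem IsExpanderColoring.isQuasirandom (h : IsExpanderColoring N M η Col) (hη : 0 ≤ η)
    (m : Fin M) : IsQuasirandom (Col · · = m) (M : ℝ)⁻¹ (η * N ^ 2) := by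
  intro s t
  have hM : (1 : ℝ) ≤ M := mod_cast m.pos
  have hs : (#s : ℝ) ≤ N := by simpa using (card_le_univ s : #s ≤ Fintype.card (Fin N))
  have ht : (#t : ℝ) ≤ N := by simpa using (card_le_univ t : #t ≤ Fintype.card (Fin N))
  have hc : (#(interedges (Col · · = m) s t) : ℝ) ≤ #s * #t :=
    mod_cast card_interedges_le_mul _ s t
  have hb : (M : ℝ)⁻¹ * #s * #t ≤ #s * #t := by
    rw [mul_assoc]
    exact mul_le_of_le_one_left (by positivity) (inv_le_one_of_one_le₀ hM)
  have hb₀ : 0 ≤ (M : ℝ)⁻¹ * #s * #t := by positivity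
  have hst : (#s : ℝ) * #t ≤ N ^ 2 := by rw [sq]; gcongr
  rw [abs_le]
  by_cases hlarge : η * N ≤ #s ∧ η * N ≤ #t
  · obtain ⟨h₁, h₂⟩ : Approx (#(interedges (Col · · = m) s t)) (#s * #t / M) η :=
      h s t hlarge.1 hlarge.2 m
    rw [div_eq_inv_mul, ← mul_assoc] at h₁ h₂
    constructor <;> nlinarith
  · have hsmall : (#s : ℝ) * #t ≤ η * N ^ 2 := by
      rcases not_and_or.mp hlarge with h | h <;> rw [not_le] at h <;> nlinarith
    constructor <;> nlinarith

end ExpanderColoring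

section MonochromaticTriangles

variable {N M : ℕ} (Col : Fin N → Fin N → Fin M)

def monochromaticTriangles : Finset (Fin N × Fin N × Fin N) :=
  univ.filter fun p => Col p.1 p.2.1 = Col p.1 p.2.2 ∧ Col p.1 p.2.2 = Col p.2.1 p.2.2

theorem ind_monochromaticTriangles (x y z : Fin N) :
    ind (monochromaticTriangles Col) x y z =
      ∑ m, if Col x z = m ∧ Col y z = m ∧ Col x y = m then 1 else 0 := by
  rw [Fintype.sum_eq_single (Col x y) fun m hm => if_neg fun h => hm h.2.2.symm]
  simp only [ind, monochromaticTriangles, mem_filter, mem_univ, true_and]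
  grind

theorem ind_mul_ind_monochromaticTriangles_z (x y z z' : Fin N) :
    ind (monochromaticTriangles Col) x y z * ind (monochromaticTriangles Col) x y z' =
      ∑ m, if (Col x z = m ∧ Col x z' = m) ∧ (Col y z = m ∧ Col y z' = m) ∧ Col x y = m
        then 1 else 0 := by
  rw [Fintype.sum_eq_single (Col x y) fun m hm => if_neg fun h => hm h.2.2.symm]
  simp only [ind, monochromaticTriangles, mem_filter, mem_univ, true_and, ite_zero_mul_ite_zero,
    mul_one]
  grind

theorem ind_mul_ind_monochromaticTriangles_x (x x' y z : Fin N) :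
    ind (monochromaticTriangles Col) x y z * ind (monochromaticTriangles Col) x' y z =
      ∑ m, if (Col x y = m ∧ Col x' y = m) ∧ (Col x z = m ∧ Col x' z = m) ∧ Col y z = m
        then 1 else 0 := by
  rw [Fintype.sum_eq_single (Col y z) fun m hm => if_neg fun h => hm h.2.2.symm]
  simp only [ind, monochromaticTriangles, mem_filter, mem_univ, true_and, ite_zero_mul_ite_zero,
    mul_one]
  grind

theorem ind_mul_ind_monochromaticTriangles_y (x y y' z : Fin N) :
    ind (monochromaticTriangles Col) x y z * ind (monochromaticTriangles Col) x y' z =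
      ∑ m, if (Col x y = m ∧ Col x y' = m) ∧ (Col y z = m ∧ Col y' z = m) ∧ Col x z = m
        then 1 else 0 := by
  rw [Fintype.sum_eq_single (Col x z) fun m hm => if_neg fun h => hm h.2.2.symm]
  simp only [ind, monochromaticTriangles, mem_filter, mem_univ, true_and, ite_zero_mul_ite_zero,
    mul_one]
  grind

theorem sum_ind_monochromaticTriangles (X Y Z : Finset (Fin N)) :
    ∑ x ∈ X, ∑ y ∈ Y, ∑ z ∈ Z, ind (monochromaticTriangles Col) x y z =
      ∑ m, (triangleCount (Col · · = m) (Col · · = m) (Col · · = m) X Y Z : ℝ) := by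
  simp only [ind_monochromaticTriangles, triangleCount_eq_sum]
  simp only [sum_comm (t := univ), sum_comm (s := X) (t := Z), sum_comm (s := Y) (t := Z)]

theorem sum_ind_mul_ind_monochromaticTriangles_z (X Y Z : Finset (Fin N)) :
    ∑ x ∈ X, ∑ y ∈ Y, ∑ z ∈ Z, ∑ z' ∈ Z,
        ind (monochromaticTriangles Col) x y z * ind (monochromaticTriangles Col) x y z' =
      ∑ m, (diamondCount (Col · · = m) (Col · · = m) (Col · · = m) X Y Z : ℝ) := by
  simp only [ind_mul_ind_monochromaticTriangles_z, diamondCount_eq_sum]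
  simp only [sum_comm (t := univ), sum_comm (s := X) (t := Z), sum_comm (s := Y) (t := Z)]

theorem sum_ind_mul_ind_monochromaticTriangles_x (X Y Z : Finset (Fin N)) :
    ∑ x ∈ X, ∑ x' ∈ X, ∑ y ∈ Y, ∑ z ∈ Z,
        ind (monochromaticTriangles Col) x y z * ind (monochromaticTriangles Col) x' y z =
      ∑ m, (diamondCount (fun a b => Col b a = m) (fun a b => Col b a = m) (Col · · = m)
        Y Z X : ℝ) := by
  simp only [ind_mul_ind_monochromaticTriangles_x, diamondCount_eq_sum]
  simp only [sum_comm (t := univ)]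

theorem sum_ind_mul_ind_monochromaticTriangles_y (X Y Z : Finset (Fin N)) :
    ∑ x ∈ X, ∑ y ∈ Y, ∑ y' ∈ Y, ∑ z ∈ Z,
        ind (monochromaticTriangles Col) x y z * ind (monochromaticTriangles Col) x y' z =
      ∑ m, (diamondCount (Col · · = m) (fun a b => Col b a = m) (Col · · = m) X Z Y : ℝ) := by
  simp only [ind_mul_ind_monochromaticTriangles_y, diamondCount_eq_sum]
  simp only [sum_comm (t := univ), sum_comm (s := X) (t := Y)]

end MonochromaticTriangles

section ColourSums

variable {N M : ℕ} {Col : Fin N → Fin N → Fin M} {ε : ℝ}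

theorem abs_sum_ind_sub_le (hM : 0 < M) (hq : ∀ m, IsQuasirandom (Col · · = m) (M : ℝ)⁻¹ ε)
    (X Y Z : Finset (Fin N)) :
    |∑ x ∈ X, ∑ y ∈ Y, ∑ z ∈ Z, ind (monochromaticTriangles Col) x y z -
        #X * #Y * #Z * ((M : ℝ) ^ 2)⁻¹| ≤ M * (3 * N * ε) := by
  have hδ : (M : ℝ)⁻¹ ≤ 1 := inv_le_one_of_one_le₀ (mod_cast hM)
  have h := abs_sum_sub_sum_le_card_mul univ fun m _ =>
    abs_triangleCount_sub_le (hq m) (hq m) (hq m) (by positivity) hδ X Y Z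
  simp only [sum_const, card_univ, Fintype.card_fin, nsmul_eq_mul] at h
  rw [sum_ind_monochromaticTriangles]
  convert h using 3
  field_simp

theorem abs_sum_ind_mul_ind_z_sub_le (hM : 0 < M)
    (hq : ∀ m, IsQuasirandom (Col · · = m) (M : ℝ)⁻¹ ε) (X Y Z : Finset (Fin N)) :
    |∑ x ∈ X, ∑ y ∈ Y, ∑ z ∈ Z, ∑ z' ∈ Z,
        ind (monochromaticTriangles Col) x y z * ind (monochromaticTriangles Col) x y z' -
        #X * #Y * #Z * #Z * ((M : ℝ) ^ 2)⁻¹ ^ 2| ≤ M * (5 * N ^ 2 * ε) := by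
  have hδ : (M : ℝ)⁻¹ ≤ 1 := inv_le_one_of_one_le₀ (mod_cast hM)
  have h := abs_sum_sub_sum_le_card_mul univ fun m _ =>
    abs_diamondCount_sub_le (hq m) (hq m) (hq m) (by positivity) hδ X Y Z
  simp only [sum_const, card_univ, Fintype.card_fin, nsmul_eq_mul] at h
  rw [sum_ind_mul_ind_monochromaticTriangles_z]
  convert h using 3
  field_simp

theorem abs_sum_ind_mul_ind_x_sub_le (hM : 0 < M)
    (hq : ∀ m, IsQuasirandom (Col · · = m) (M : ℝ)⁻¹ ε) (X Y Z : Finset (Fin N)) :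
    |∑ x ∈ X, ∑ x' ∈ X, ∑ y ∈ Y, ∑ z ∈ Z,
        ind (monochromaticTriangles Col) x y z * ind (monochromaticTriangles Col) x' y z -
        #X * #X * #Y * #Z * ((M : ℝ) ^ 2)⁻¹ ^ 2| ≤ M * (5 * N ^ 2 * ε) := by
  have hδ : (M : ℝ)⁻¹ ≤ 1 := inv_le_one_of_one_le₀ (mod_cast hM)
  have h := abs_sum_sub_sum_le_card_mul univ fun m _ =>
    abs_diamondCount_sub_le (hq m).swap (hq m).swap (hq m) (by positivity) hδ Y Z X
  simp only [sum_const, card_univ, Fintype.card_fin, nsmul_eq_mul] at h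
  rw [sum_ind_mul_ind_monochromaticTriangles_x]
  convert h using 3
  field_simp

theorem abs_sum_ind_mul_ind_y_sub_le (hM : 0 < M)
    (hq : ∀ m, IsQuasirandom (Col · · = m) (M : ℝ)⁻¹ ε) (X Y Z : Finset (Fin N)) :
    |∑ x ∈ X, ∑ y ∈ Y, ∑ y' ∈ Y, ∑ z ∈ Z,
        ind (monochromaticTriangles Col) x y z * ind (monochromaticTriangles Col) x y' z -
        #X * #Y * #Y * #Z * ((M : ℝ) ^ 2)⁻¹ ^ 2| ≤ M * (5 * N ^ 2 * ε) := by
  have hδ : (M : ℝ)⁻¹ ≤ 1 := inv_le_one_of_one_le₀ (mod_cast hM)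
  have h := abs_sum_sub_sum_le_card_mul univ fun m _ =>
    abs_diamondCount_sub_le (hq m) (hq m).swap (hq m) (by positivity) hδ X Z Y
  simp only [sum_const, card_univ, Fintype.card_fin, nsmul_eq_mul] at h
  rw [sum_ind_mul_ind_monochromaticTriangles_y]
  convert h using 3
  field_simp

end ColourSums

section Averages

theorem sum_ind_univ {N : ℕ} (D : Finset (Fin N × Fin N × Fin N)) :
    ∑ x, ∑ y, ∑ z, ind D x y z = #D := by
  simp_rw [ind, ← Fintype.sum_prod_type']
  simp

theorem avg1_univ {N : ℕ} (D : Finset (Fin N × Fin N × Fin N)) :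
    avg1 D univ univ univ = density D := by
  simp only [avg1, density, sum_ind_univ, card_univ, Fintype.card_fin]
  ring

theorem le_card_of_large_cube {N : ℕ} {γ : ℝ} {X Y Z : Finset (Fin N)} (hN : 0 < N)
    (hcube : γ * N ^ 3 ≤ #X * #Y * #Z) : γ * N ≤ #X ∧ γ * N ≤ #Y ∧ γ * N ≤ #Z := by
  have hN' : (0 : ℝ) < N ^ 2 := by positivity
  have key (A B C : Finset (Fin N)) (h : γ * N ^ 3 ≤ #A * #B * #C) : γ * N ≤ #C := by
    refine le_of_mul_le_mul_left ?_ hN'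
    calc (N : ℝ) ^ 2 * (γ * N) = γ * N ^ 3 := by ring
      _ ≤ (#A : ℝ) * #B * #C := h
      _ ≤ (N : ℝ) * N * #C := by gcongr <;> exact card_le_univ _ |>.trans_eq (Fintype.card_fin N)
      _ = (N : ℝ) ^ 2 * #C := by ring
  exact ⟨key Y Z X (hcube.trans_eq (by ring)), key X Z Y (hcube.trans_eq (by ring)),
    key X Y Z hcube⟩

theorem pow_four_le_of_large_cube {N : ℕ} {γ : ℝ} {X Y Z : Finset (Fin N)} (hN : 0 < N)
    (hγ : 0 ≤ γ) (hcube : γ * N ^ 3 ≤ #X * #Y * #Z) :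
    γ ^ 2 * N ^ 4 ≤ #X * #Y * #Z * #Z ∧ γ ^ 2 * N ^ 4 ≤ #X * #X * #Y * #Z ∧
      γ ^ 2 * N ^ 4 ≤ #X * #Y * #Y * #Z := by
  obtain ⟨hX, hY, hZ⟩ := le_card_of_large_cube hN hcube
  have key (c : ℝ) (hc : γ * N ≤ c) : γ ^ 2 * N ^ 4 ≤ #X * #Y * #Z * c :=
    calc γ ^ 2 * N ^ 4 = γ * N ^ 3 * (γ * N) := by ring
      _ ≤ #X * #Y * #Z * c := by gcongr
  exact ⟨key _ hZ, (key _ hX).trans_eq (by ring), (key _ hY).trans_eq (by ring)⟩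

end Averages

section ErrorBudget

variable {N M : ℕ} {η γ S a : ℝ}

theorem abs_div_sub_le_of_triangle_error (hN : 0 < N) (hM : 0 < M) (hγ₀ : 0 < γ) (hγ₁ : γ ≤ 1)
    (hη₀ : 0 ≤ η) (hη : 40 * M ^ 5 * η ≤ γ ^ 3) (hS : γ * N ^ 3 ≤ S)
    (h : |a - S * ((M : ℝ) ^ 2)⁻¹| ≤ M * (3 * N * (η * N ^ 2))) :
    |a / S - ((M : ℝ) ^ 2)⁻¹| ≤ γ / 8 * ((M : ℝ) ^ 2)⁻¹ := by
  have hN' : (0 : ℝ) < N := mod_cast hN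
  have hM' : (1 : ℝ) ≤ M := mod_cast hM
  have hη₃ : 24 * M ^ 3 * η ≤ γ ^ 2 := by
    have : (M : ℝ) ^ 3 ≤ M ^ 5 := pow_le_pow_right₀ hM' (by norm_num)
    nlinarith [pow_le_pow_of_le_one hγ₀.le hγ₁ (by norm_num : 2 ≤ 3)]
  refine abs_div_sub_le_of_abs_sub_le ((mul_pos hγ₀ (pow_pos hN' 3)).trans_le hS) h ?_
  calc (M : ℝ) * (3 * N * (η * N ^ 2)) = 24 * M ^ 3 * η * N ^ 3 / (8 * M ^ 2) := by
        field_simp; ring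
    _ ≤ γ ^ 2 * N ^ 3 / (8 * M ^ 2) := by gcongr
    _ = γ / 8 * ((M : ℝ) ^ 2)⁻¹ * (γ * N ^ 3) := by field_simp
    _ ≤ γ / 8 * ((M : ℝ) ^ 2)⁻¹ * S := by gcongr

theorem abs_div_sub_le_of_diamond_error (hN : 0 < N) (hM : 0 < M) (hγ₀ : 0 < γ)
    (hη : 40 * M ^ 5 * η ≤ γ ^ 3) (hS : γ ^ 2 * N ^ 4 ≤ S)
    (h : |a - S * ((M : ℝ) ^ 2)⁻¹ ^ 2| ≤ M * (5 * N ^ 2 * (η * N ^ 2))) :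
    |a / S - ((M : ℝ) ^ 2)⁻¹ ^ 2| ≤ γ / 8 * ((M : ℝ) ^ 2)⁻¹ ^ 2 := by
  have hN' : (0 : ℝ) < N := mod_cast hN
  have hM' : (0 : ℝ) < M := mod_cast hM
  refine abs_div_sub_le_of_abs_sub_le
    ((mul_pos (pow_pos hγ₀ 2) (pow_pos hN' 4)).trans_le hS) h ?_
  calc (M : ℝ) * (5 * N ^ 2 * (η * N ^ 2)) = 40 * M ^ 5 * η * N ^ 4 / (8 * M ^ 4) := by
        field_simp; ring
    _ ≤ γ ^ 3 * N ^ 4 / (8 * M ^ 4) := by gcongr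
    _ = γ / 8 * ((M : ℝ) ^ 2)⁻¹ ^ 2 * (γ ^ 2 * N ^ 4) := by field_simp
    _ ≤ γ / 8 * ((M : ℝ) ^ 2)⁻¹ ^ 2 * S := by gcongr

end ErrorBudget

/-- the set of monochromatic triangles of a good expander coloring
is pseudorandom with respect to large cubes. -/
theorem expander_coloring_pseudorandom :
    ∃ c : ℝ, 0 < c ∧
      ∀ (N M : ℕ) (η γ : ℝ) (Col : Fin N → Fin N → Fin M),
        0 < N → 0 < M → 0 < γ → γ < 1 →
        IsExpanderColoring N M η Col →
        η ≤ c * γ ^ 3 / (M : ℝ) ^ 5 →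
        PseudorandomLargeCubes
          (Finset.univ.filter fun p : Fin N × Fin N × Fin N =>
            Col p.1 p.2.1 = Col p.1 p.2.2 ∧ Col p.1 p.2.2 = Col p.2.1 p.2.2) γ := by
  refine ⟨1 / 40, by norm_num, fun N M η γ Col hN hM hγ₀ hγ₁ hexp hη => ?_⟩
  change PseudorandomLargeCubes (monochromaticTriangles Col) γ
  intro X Y Z hcube
  have hη₀ := hexp.nonneg hN hM
  have hq := hexp.isQuasirandom hη₀
  have hη' : 40 * M ^ 5 * η ≤ γ ^ 3 := by
    rw [le_div_iff₀ (by positivity)] at hη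
    linarith
  have hdens : |density (monochromaticTriangles Col) - ((M : ℝ) ^ 2)⁻¹| ≤
      γ / 8 * ((M : ℝ) ^ 2)⁻¹ := by
    rw [← avg1_univ]
    refine abs_div_sub_le_of_triangle_error hN hM hγ₀ hγ₁.le hη₀ hη' ?_
      (abs_sum_ind_sub_le hM hq _ _ _)
    simpa [pow_succ] using mul_le_of_le_one_left (by positivity : (0 : ℝ) ≤ N ^ 3) hγ₁.le
  obtain ⟨hZZ, hXX, hYY⟩ := pow_four_le_of_large_cube hN hγ₀.le hcube
  refine ⟨approx_of_abs_sub_le hγ₀.le hγ₁.le (by positivity) ?_ hdens, ?_, ?_, ?_⟩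
  · exact abs_div_sub_le_of_triangle_error hN hM hγ₀ hγ₁.le hη₀ hη' hcube
      (abs_sum_ind_sub_le hM hq X Y Z)
  all_goals refine approx_sq_of_abs_sub_le hγ₀.le hγ₁.le (by positivity) ?_ hdens
  · exact abs_div_sub_le_of_diamond_error hN hM hγ₀ hη' hZZ
      (abs_sum_ind_mul_ind_z_sub_le hM hq X Y Z)
  · exact abs_div_sub_le_of_diamond_error hN hM hγ₀ hη' hXX
      (abs_sum_ind_mul_ind_x_sub_le hM hq X Y Z)
  · exact abs_div_sub_le_of_diamond_error hN hM hγ₀ hη' hYY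
      (abs_sum_ind_mul_ind_y_sub_le hM hq X Y Z)
end
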